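/- arXiv:0711.0676 — 6 statements merged into one kernel-verified Lean document; each statement's English description precedes it below -/
import Mathlib

section
/- Let p be a positive even integer, let 0 < a < 1/2, and let f be a positive definite trigonometric polynomial on the torus 𝕋 = ℝ/ℤ. Then (1/(2a)) ∫_{-a}^{a} |f(x)|^p dx ≥ (1/2) ∫_{-1/2}^{1/2} |f(x)|^p dx. -/
/-!
Write `p = 2q`. Then `|f|^p = |g|^2` for `g = f^q`, again a trigonometric polynomial with
nonnegative coefficients `b_i` and frequencies `k_i`, and for every weight `φ` the integral
`∫ φ |g|^2` is the quadratic form `∑ b_i b_j ∫ φ(x) cos(2π(k_i - k_j)x) dx`. The tent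
`a - |x|` on `[-a, a]` has Fourier transform `2(1 - cos(ab))/b^2 ≥ 0`, with value `a^2` at `0`,
while the Fourier transform of the unit interval is the indicator of `0`. Since all `b_i b_j ≥ 0`,
this compares the two quadratic forms term by term:
`a^2 ∫_{-1/2}^{1/2} |g|^2 ≤ ∫_{-a}^{a} (a - |x|) |g|^2 ≤ a ∫_{-a}^{a} |g|^2`.
-/

open MeasureTheory Finset Real intervalIntegral

theorem integral_symm_eq_two_mul_of_even {E : Type*} [NormedAddCommGroup E] [NormedSpace ℝ E]
    {f : ℝ → E} (heven : ∀ x, f (-x) = f x) {a : ℝ} (hf : IntervalIntegrable f volume 0 a) :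
    ∫ x in -a..a, f x = (2 : ℝ) • ∫ x in 0..a, f x := by
  have hneg : ∫ x in -a..0, f x = ∫ x in 0..a, f x := by
    simpa [heven] using (integral_comp_neg (a := 0) (b := a) f).symm
  have hf' : IntervalIntegrable f volume (-a) 0 := by
    simpa [heven] using ((IntervalIntegrable.iff_comp_neg).mp hf).symm
  rw [← integral_add_adjacent_intervals hf' hf, hneg, two_smul]

theorem integral_cos_two_pi_int_mul (m : ℤ) :
    ∫ x in (-(1 / 2) : ℝ)..1 / 2, cos (2 * π * m * x) = if m = 0 then 1 else 0 := by
  split_ifs with hm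
  · norm_num [hm]
  · have h2πm : 2 * π * m ≠ 0 := by positivity
    rw [integral_comp_mul_left (fun x => cos x) h2πm, integral_cos, mul_neg, Real.sin_neg,
      show 2 * π * m * (1 / 2) = m * π by ring, sin_int_mul_pi]
    simp

theorem integral_tent_mul_cos {a b : ℝ} (ha : 0 ≤ a) (hb : b ≠ 0) :
    ∫ x in -a..a, (a - |x|) * cos (b * x) = 2 * (1 - cos (b * a)) / b ^ 2 := by
  have hcont : Continuous fun x => (a - |x|) * cos (b * x) := by fun_prop
  rw [integral_symm_eq_two_mul_of_even (fun x => by simp [mul_neg]) (hcont.intervalIntegrable _ _)]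
  have hderiv : ∀ x ∈ Set.uIcc 0 a, HasDerivAt
      (fun y => (a - y) * sin (b * y) / b - cos (b * y) / b ^ 2)
      ((a - x) * cos (b * x)) x := by
    intro x _
    have hbx := (hasDerivAt_id x).const_mul b
    have h : HasDerivAt (fun y => (a - y) * sin (b * y) / b - cos (b * y) / b ^ 2) _ x :=
      ((((hasDerivAt_id x).const_sub a).mul hbx.sin).div_const b).sub (hbx.cos.div_const (b ^ 2))
    refine h.congr_deriv ?_
    simp only [id]
    field_simp
    ring
  have hcongr : Set.EqOn (fun x => (a - |x|) * cos (b * x))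
      (fun x => (a - x) * cos (b * x)) (Set.uIcc 0 a) := by
    intro x hx
    rw [Set.uIcc_of_le ha] at hx
    simp only [abs_of_nonneg hx.1]
  have hcont' : Continuous fun x => (a - x) * cos (b * x) := by fun_prop
  rw [integral_congr hcongr, integral_eq_sub_of_hasDerivAt hderiv (hcont'.intervalIntegrable _ _)]
  simp
  field_simp
  ring

theorem integral_tent {a : ℝ} (ha : 0 ≤ a) : ∫ x in -a..a, (a - |x|) = a ^ 2 := by
  have hcont : Continuous fun x : ℝ => a - |x| := by fun_prop
  rw [integral_symm_eq_two_mul_of_even (fun x => by simp) (hcont.intervalIntegrable _ _)]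
  rw [integral_congr (g := fun x => a - x) fun x hx => by
    rw [Set.uIcc_of_le ha] at hx; simp only [abs_of_nonneg hx.1],
    integral_sub intervalIntegrable_const intervalIntegrable_id, integral_id]
  simp
  ring

theorem sq_mul_integral_cos_le_integral_tent_mul_cos {a : ℝ} (ha : 0 ≤ a) (m : ℤ) :
    a ^ 2 * ∫ x in (-(1 / 2) : ℝ)..1 / 2, cos (2 * π * m * x) ≤
      ∫ x in -a..a, (a - |x|) * cos (2 * π * m * x) := by
  rw [integral_cos_two_pi_int_mul]
  split_ifs with hm
  · simp [hm, integral_tent ha]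
  · rw [mul_zero, integral_tent_mul_cos ha (by positivity)]
    exact div_nonneg (by linarith [cos_le_one (2 * π * m * a)]) (sq_nonneg _)

theorem integral_tent_mul_le {a : ℝ} (ha : 0 ≤ a) {h : ℝ → ℝ} (hh : ∀ x, 0 ≤ h x)
    (hint : IntervalIntegrable h volume (-a) a) :
    ∫ x in -a..a, (a - |x|) * h x ≤ a * ∫ x in -a..a, h x := by
  rw [← intervalIntegral.integral_const_mul]
  refine integral_mono_on (by linarith) (hint.continuousOn_mul (by fun_prop)) (hint.const_mul a)
    fun x _ => mul_le_mul_of_nonneg_right (by linarith [abs_nonneg x]) (hh x)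

-- Frequencies may repeat, so that a power of such a sum is again one without collecting terms.
noncomputable def trigSum {ι : Type*} (s : Finset ι) (b : ι → ℝ) (k : ι → ℤ) (x : ℝ) : ℂ :=
  ∑ i ∈ s, (b i : ℂ) * Complex.exp (2 * π * Complex.I * (k i : ℂ) * (x : ℂ))

section TrigSum

variable {ι : Type*} (s : Finset ι) (b : ι → ℝ) (k : ι → ℤ)

theorem continuous_trigSum : Continuous (trigSum s b k) := by
  unfold trigSum
  fun_prop

theorem trigSum_pow (q : ℕ) (x : ℝ) :
    trigSum s b k x ^ q =
      trigSum (Fintype.piFinset fun _ : Fin q => s) (fun v => ∏ t, b (v t))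
        (fun v => ∑ t, k (v t)) x := by
  rw [trigSum, ← Fin.prod_const, prod_univ_sum, trigSum]
  refine sum_congr rfl fun v _ => ?_
  rw [prod_mul_distrib, ← Complex.exp_sum]
  push_cast
  rw [mul_sum, sum_mul]

theorem norm_trigSum_sq (x : ℝ) :
    ‖trigSum s b k x‖ ^ 2 =
      ∑ i ∈ s, ∑ j ∈ s, b i * b j * cos (2 * π * (k i - k j : ℤ) * x) := by
  have hterm : ∀ i j, (b i : ℂ) * Complex.exp (2 * π * Complex.I * (k i : ℂ) * x) *
      (starRingEnd ℂ) ((b j : ℂ) * Complex.exp (2 * π * Complex.I * (k j : ℂ) * x)) =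
      (b i * b j : ℝ) * Complex.exp ((2 * π * (k i - k j : ℤ) * x : ℝ) * Complex.I) := by
    intro i j
    simp only [map_mul, ← Complex.exp_conj, Complex.conj_ofReal, Complex.conj_I, map_ofNat,
      map_intCast]
    rw [mul_mul_mul_comm, ← Complex.exp_add]
    push_cast
    ring_nf
  rw [← Complex.normSq_eq_norm_sq, ← Complex.ofReal_re (Complex.normSq _), ← Complex.mul_conj,
    trigSum, map_sum, sum_mul_sum, Complex.re_sum]
  simp_rw [hterm, Complex.re_sum, Complex.re_ofReal_mul, Complex.exp_ofReal_mul_I_re]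

theorem integral_mul_norm_trigSum_sq {φ : ℝ → ℝ} {α β : ℝ}
    (hφ : IntervalIntegrable φ volume α β) :
    ∫ x in α..β, φ x * ‖trigSum s b k x‖ ^ 2 =
      ∑ i ∈ s, ∑ j ∈ s, b i * b j * ∫ x in α..β, φ x * cos (2 * π * (k i - k j : ℤ) * x) := by
  have hint : ∀ m : ℤ, IntervalIntegrable (fun x => φ x * cos (2 * π * m * x)) volume α β :=
    fun m => hφ.mul_continuousOn (by fun_prop)
  have hexpand : ∀ x, φ x * ‖trigSum s b k x‖ ^ 2 =
      ∑ i ∈ s, ∑ j ∈ s, b i * b j * (φ x * cos (2 * π * (k i - k j : ℤ) * x)) := by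
    intro x
    simp_rw [norm_trigSum_sq, mul_sum, mul_left_comm (φ x)]
  simp_rw [hexpand]
  rw [integral_finsetSum fun i _ => by
    simpa only [sum_fn] using
      IntervalIntegrable.sum s fun j _ => (hint (k i - k j)).const_mul (b i * b j)]
  refine sum_congr rfl fun i _ => ?_
  rw [integral_finsetSum fun j _ => (hint _).const_mul _]
  simp_rw [intervalIntegral.integral_const_mul]

end TrigSum

section PositiveDefinite

variable {ι : Type*} (s : Finset ι) {b : ι → ℝ} (k : ι → ℤ)

theorem sq_mul_integral_norm_trigSum_sq_le (hb : ∀ i ∈ s, 0 ≤ b i) {a : ℝ} (ha : 0 ≤ a) :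
    a ^ 2 * ∫ x in (-(1 / 2) : ℝ)..1 / 2, ‖trigSum s b k x‖ ^ 2 ≤
      ∫ x in -a..a, (a - |x|) * ‖trigSum s b k x‖ ^ 2 := by
  have hunit : ∫ x in (-(1 / 2) : ℝ)..1 / 2, ‖trigSum s b k x‖ ^ 2 =
      ∑ i ∈ s, ∑ j ∈ s,
        b i * b j * ∫ x in (-(1 / 2) : ℝ)..1 / 2, cos (2 * π * (k i - k j : ℤ) * x) := by
    simpa only [one_mul] using
      integral_mul_norm_trigSum_sq s b k (φ := fun _ => 1) intervalIntegrable_const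
  have htent : Continuous fun x : ℝ => a - |x| := by fun_prop
  rw [hunit, integral_mul_norm_trigSum_sq s b k (htent.intervalIntegrable _ _), mul_sum]
  refine sum_le_sum fun i hi => ?_
  rw [mul_sum]
  refine sum_le_sum fun j hj => ?_
  rw [mul_left_comm]
  exact mul_le_mul_of_nonneg_left (sq_mul_integral_cos_le_integral_tent_mul_cos ha _)
    (mul_nonneg (hb i hi) (hb j hj))

theorem mul_integral_norm_trigSum_sq_le (hb : ∀ i ∈ s, 0 ≤ b i) {a : ℝ} (ha : 0 < a) :
    a * ∫ x in (-(1 / 2) : ℝ)..1 / 2, ‖trigSum s b k x‖ ^ 2 ≤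
      ∫ x in -a..a, ‖trigSum s b k x‖ ^ 2 := by
  have hint : IntervalIntegrable (fun x => ‖trigSum s b k x‖ ^ 2) volume (-a) a :=
    ((continuous_trigSum s b k).norm.pow 2).intervalIntegrable _ _
  have := (sq_mul_integral_norm_trigSum_sq_le s k hb ha.le).trans
    (integral_tent_mul_le ha.le (fun x => by positivity) hint)
  rw [sq, mul_assoc] at this
  exact le_of_mul_le_mul_left this ha

end PositiveDefinite

theorem wiener_shapiro_inequality_general
    (p : ℕ) (hp_even : Even p)
    (a : ℝ) (ha : 0 < a)
    (H : Finset ℤ) (c : ℤ → ℝ) (hc : ∀ k ∈ H, 0 ≤ c k)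
    (f : ℝ → ℂ)
    (hf : ∀ x : ℝ, f x =
      ∑ k ∈ H, (c k : ℂ) * Complex.exp (2 * Real.pi * Complex.I * (k : ℂ) * (x : ℂ))) :
    (1 / 2 : ℝ) * ∫ x in (-(1 / 2) : ℝ)..(1 / 2 : ℝ), ‖f x‖ ^ p ≤
      (1 / (2 * a)) * ∫ x in (-a)..a, ‖f x‖ ^ p := by
  obtain ⟨q, rfl⟩ := hp_even
  have hpow : ∀ x, ‖f x‖ ^ (q + q) = ‖trigSum H c id x ^ q‖ ^ 2 := fun x => by
    rw [norm_pow, ← pow_mul, mul_two, hf x]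
    rfl
  simp_rw [hpow, trigSum_pow]
  have hcoeff : ∀ v ∈ Fintype.piFinset fun _ : Fin q => H, 0 ≤ ∏ t, c (v t) := fun v hv =>
    prod_nonneg fun t _ => hc _ (Fintype.mem_piFinset.mp hv t)
  have hsq := mul_integral_norm_trigSum_sq_le _ (fun v => ∑ t, id (v t)) hcoeff ha
  rw [one_div_mul_eq_div (2 * a), le_div_iff₀ (by positivity)]
  linarith

/-- **Wiener–Shapiro inequality.** For `p` a positive even integer, `0 < a < 1/2`,
and `f` a positive definite trigonometric polynomial (nonnegative Fourier
coefficients `c k` on a finite spectrum `H ⊆ ℤ`), we have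
`(1/(2a)) ∫_{-a}^{a} |f|^p ≥ (1/2) ∫_{-1/2}^{1/2} |f|^p`. -/
theorem wiener_shapiro_inequality
    (p : ℕ) (hp_even : Even p) (hp_pos : 0 < p)
    (a : ℝ) (ha : 0 < a) (ha' : a < 1 / 2)
    (H : Finset ℤ) (c : ℤ → ℝ) (hc : ∀ k ∈ H, 0 ≤ c k)
    (f : ℝ → ℂ)
    (hf : ∀ x : ℝ, f x =
      ∑ k ∈ H, (c k : ℂ) * Complex.exp (2 * Real.pi * Complex.I * (k : ℂ) * (x : ℂ))) :
    (1 / 2 : ℝ) * ∫ x in (-(1 / 2) : ℝ)..(1 / 2 : ℝ), ‖f x‖ ^ p ≤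
      (1 / (2 * a)) * ∫ x in (-a)..a, ‖f x‖ ^ p :=
  wiener_shapiro_inequality_general p hp_even a ha H c hc f hf
end

section
/- Let p be a positive even integer and let k > 2 be an integer. For every 0 < a < 1/k and every b > 1/k there exists an idempotent trigonometric polynomial f such that ∫_{-a}^{a} |f(x)|^p dx ≤ b · ∫_{-1/2}^{1/2} |f(x)|^p dx. In particular, the constant 1/2 in Wiener–Shapiro's inequality cannot be improved, even among idempotents. -/
/-!
Take `f = ∑_{j<N} e_{jk}`, i.e. `f(x) = D_N(kx)` with `D_N = ∑_{j<N} e_j` (`dirichletSum N`).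
By periodicity `∫_{-1/2}^{1/2} |f|^p = ∫_{-1/2}^{1/2} |D_N|^p =: T_N`, while
`∫_{-a}^{a} |f|^p = k⁻¹ ∫_{-ka}^{ka} |D_N|^p ≤ k⁻¹ (T_N + C)` with `C` independent of `N`:
since `ka < 1`, the part of `[-ka, ka]` outside one period sits, modulo `1`, at distance
`≥ 1 - ka` from `0`, where `|D_N(x)| ≤ 1/(2|x|)`. Since `|D_N| ≥ N/2` on `[-1/(8N), 1/(8N)]`,
`T_N ≳ N^{p-1} → ∞` for `p ≥ 2`, so eventually `C ≤ (kb - 1) T_N`.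
-/

open MeasureTheory Finset Complex Real Filter

noncomputable def dirichletSum (N : ℕ) (x : ℝ) : ℂ :=
  ∑ j ∈ range N, exp (2 * π * I * j * x)

lemma dirichletSum_eq_geom_sum (N : ℕ) (x : ℝ) :
    dirichletSum N x = ∑ j ∈ range N, exp ((2 * π * x : ℝ) * I) ^ j := by
  refine sum_congr rfl fun j _ => ?_
  rw [← Complex.exp_nat_mul]
  push_cast
  ring_nf

lemma periodic_dirichletSum (N : ℕ) : Function.Periodic (dirichletSum N) 1 := by
  intro x
  simp only [dirichletSum_eq_geom_sum]
  rw [show ((2 * π * (x + 1) : ℝ) : ℂ) * I = (2 * π * x : ℝ) * I + 2 * π * I by push_cast; ring,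
    Complex.exp_add, exp_two_pi_mul_I, mul_one]

lemma continuous_dirichletSum (N : ℕ) : Continuous (dirichletSum N) :=
  continuous_finsetSum _ fun _ _ => by fun_prop

lemma norm_dirichletSum_le (N : ℕ) {x : ℝ} (hx : |x| ≤ 1 / 2) (hx0 : x ≠ 0) :
    ‖dirichletSum N x‖ ≤ (2 * |x|)⁻¹ := by
  set z := exp ((2 * π * x : ℝ) * I)
  have hz : ‖z‖ = 1 := norm_exp_ofReal_mul_I _
  have hz1 : 4 * |x| ≤ ‖z - 1‖ := by
    have jordan := mul_abs_le_abs_sin (x := π * x)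
      (by rw [abs_mul, abs_of_pos pi_pos]; nlinarith [pi_pos])
    rw [show z = exp (I * (2 * π * x : ℝ)) by rw [mul_comm], norm_exp_I_mul_ofReal_sub_one,
      norm_mul, Real.norm_eq_abs, Real.norm_eq_abs, abs_two, show 2 * π * x / 2 = π * x by ring]
    rw [abs_mul, abs_of_pos pi_pos, ← mul_assoc, div_mul_cancel₀ _ pi_ne_zero] at jordan
    linarith
  have hx' : 0 < |x| := abs_pos.mpr hx0
  have hz1' : z ≠ 1 := fun h => by rw [← sub_eq_zero] at h; rw [h, norm_zero] at hz1; linarith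
  have hzN : ‖z ^ N - 1‖ ≤ 2 := by
    calc ‖z ^ N - 1‖ ≤ ‖z ^ N‖ + ‖(1 : ℂ)‖ := norm_sub_le _ _
      _ = 2 := by rw [norm_pow, hz, one_pow, norm_one]; norm_num
  rw [dirichletSum_eq_geom_sum, geom_sum_eq hz1', norm_div, div_le_iff₀ (by linarith)]
  calc ‖z ^ N - 1‖ ≤ 2 := hzN
    _ = (2 * |x|)⁻¹ * (4 * |x|) := by field_simp; ring
    _ ≤ (2 * |x|)⁻¹ * ‖z - 1‖ := by gcongr

lemma half_le_norm_dirichletSum {N : ℕ} {x : ℝ} (hx : |x| ≤ (8 * N : ℝ)⁻¹) :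
    (N / 2 : ℝ) ≤ ‖dirichletSum N x‖ := by
  have hterm : ∀ j ∈ range N, (1 / 2 : ℝ) ≤ (exp (2 * π * I * j * x)).re := by
    intro j hj
    have hN : (0 : ℝ) < N := by exact_mod_cast pos_of_ne_zero (ne_zero_of_lt (mem_range.mp hj))
    have hjN : (j : ℝ) ≤ N := by exact_mod_cast (mem_range.mp hj).le
    have harg : |2 * π * j * x| ≤ π / 3 := by
      rw [abs_mul, abs_of_nonneg (by positivity)]
      calc 2 * π * j * |x| ≤ 2 * π * N * (8 * N : ℝ)⁻¹ := by gcongr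
        _ = π / 4 := by field_simp; ring
        _ ≤ π / 3 := by linarith [pi_pos]
    rw [show 2 * π * I * j * x = ((2 * π * j * x : ℝ) : ℂ) * I by push_cast; ring,
      exp_ofReal_mul_I_re, ← Real.cos_abs, ← cos_pi_div_three]
    exact cos_le_cos_of_nonneg_of_le_pi (abs_nonneg _) (by linarith [pi_pos]) harg
  calc (N / 2 : ℝ) = ∑ _j ∈ range N, (1 / 2 : ℝ) := by
        rw [sum_const, card_range, nsmul_eq_mul]; ring
    _ ≤ (dirichletSum N x).re := by rw [dirichletSum, re_sum]; exact sum_le_sum hterm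
    _ ≤ ‖dirichletSum N x‖ := re_le_norm _

theorem Function.Periodic.intervalIntegral_comp_nat_mul {E : Type*} [NormedAddCommGroup E]
    [NormedSpace ℝ E] {f : ℝ → E} {T : ℝ} (hf : Function.Periodic f T)
    (hint : ∀ t₁ t₂, IntervalIntegrable f volume t₁ t₂) {n : ℕ} (hn : n ≠ 0) (t : ℝ) :
    ∫ x in t..t + T, f (n * x) = ∫ x in t..t + T, f x := by
  have hn' : (n : ℝ) ≠ 0 := Nat.cast_ne_zero.mpr hn
  rw [intervalIntegral.integral_comp_mul_left f hn', mul_add,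
    show (n : ℝ) * T = (n : ℤ) • T by simp, hf.intervalIntegral_add_zsmul_eq _ _ hint,
    hf.intervalIntegral_add_eq (n * t) t, natCast_zsmul, ← Nat.cast_smul_eq_nsmul ℝ, smul_smul,
    inv_mul_cancel₀ hn', one_smul]

theorem Function.Periodic.intervalIntegral_neg_self_le {g : ℝ → ℝ} (hg : Function.Periodic g 1)
    (hcont : Continuous g) (hnn : 0 ≤ g) {c M : ℝ} (hc₀ : 0 ≤ c) (hc₁ : c < 1) (hM : 0 ≤ M)
    (hgM : ∀ s, 1 - c ≤ |s| → |s| ≤ 1 / 2 → g s ≤ M) :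
    ∫ t in -c..c, g t ≤ (∫ t in -(1 / 2)..1 / 2, g t) + M := by
  have hint : ∀ t₁ t₂, IntervalIntegrable g volume t₁ t₂ := hcont.intervalIntegrable
  rcases le_or_gt c (1 / 2) with hc | hc
  · have := intervalIntegral.integral_mono_interval (a := -c) (b := c) (c := -(1 / 2))
      (d := 1 / 2) (by linarith) (by linarith) hc (Eventually.of_forall hnn) (hint _ _)
    linarith
  -- on the two tails, translating by a period lands at distance `≥ 1 - c` from `0`
  have hright : ∫ t in (1 / 2)..c, g t ≤ M / 2 := by
    have := intervalIntegral.integral_mono_on hc.le (hint _ _) intervalIntegrable_const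
      fun s hs => (hg.sub_eq s).symm.trans_le <| hgM (s - 1)
        (by rw [abs_of_nonpos (by linarith [hs.2])]; linarith [hs.2])
        (by rw [abs_of_nonpos (by linarith [hs.2])]; linarith [hs.1])
    rw [intervalIntegral.integral_const, smul_eq_mul] at this
    nlinarith
  have hleft : ∫ t in -c..-(1 / 2), g t ≤ M / 2 := by
    have := intervalIntegral.integral_mono_on (a := -c) (b := -(1 / 2)) (by linarith) (hint _ _)
      intervalIntegrable_const
      fun s hs => (hg s).symm.trans_le <| hgM (s + 1)
        (by rw [abs_of_nonneg (by linarith [hs.1])]; linarith [hs.1])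
        (by rw [abs_of_nonneg (by linarith [hs.1])]; linarith [hs.2])
    rw [intervalIntegral.integral_const, smul_eq_mul] at this
    nlinarith
  rw [← intervalIntegral.integral_add_adjacent_intervals (hint _ (-(1 / 2))) (hint _ c),
    ← intervalIntegral.integral_add_adjacent_intervals (hint _ (1 / 2)) (hint _ c)]
  linarith

lemma integral_norm_dirichletSum_pow_ge {p : ℕ} (hp : 2 ≤ p) {N : ℕ} (hN : N ≠ 0) :
    N / (4 * 2 ^ p : ℝ) ≤ ∫ x in -(1 / 2)..1 / 2, ‖dirichletSum N x‖ ^ p := by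
  have hN1 : (1 : ℝ) ≤ N := Nat.one_le_cast.mpr (Nat.one_le_iff_ne_zero.mpr hN)
  set c : ℝ := (8 * N)⁻¹
  have hc₀ : -c ≤ c := neg_le_self (by positivity)
  have hc : c ≤ 1 / 2 := by
    rw [inv_le_comm₀ (by positivity) (by norm_num)]
    linarith
  have hint : ∀ t₁ t₂, IntervalIntegrable (fun x => ‖dirichletSum N x‖ ^ p) volume t₁ t₂ :=
    ((continuous_dirichletSum N).norm.pow p).intervalIntegrable
  have hpeak : ((N : ℝ) / 2) ^ p * (2 * c) ≤ ∫ x in -c..c, ‖dirichletSum N x‖ ^ p := by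
    have := intervalIntegral.integral_mono_on hc₀ intervalIntegrable_const
      (hint _ _) fun x hx => pow_le_pow_left₀ (by positivity)
        (half_le_norm_dirichletSum (abs_le.mpr hx)) p
    rwa [intervalIntegral.integral_const, smul_eq_mul, sub_neg_eq_add, ← two_mul,
      mul_comm] at this
  have hsub := intervalIntegral.integral_mono_interval (a := -c) (b := c) (c := -(1 / 2))
    (d := 1 / 2) (by linarith) hc₀ hc (Eventually.of_forall fun _ => by positivity)
    (hint _ _)
  obtain ⟨q, rfl⟩ : ∃ q, p = q + 1 := ⟨p - 1, by omega⟩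
  calc N / (4 * 2 ^ (q + 1) : ℝ) ≤ N ^ q / (4 * 2 ^ (q + 1)) := by
        gcongr
        exact le_self_pow₀ hN1 (by omega)
    _ = ((N : ℝ) / 2) ^ (q + 1) * (2 * c) := by
        simp only [c, div_pow, pow_succ]
        field_simp
        ring
    _ ≤ _ := hpeak.trans hsub

lemma tendsto_integral_norm_dirichletSum_pow {p : ℕ} (hp : 2 ≤ p) :
    Tendsto (fun N : ℕ => ∫ x in -(1 / 2)..1 / 2, ‖dirichletSum N x‖ ^ p) atTop atTop :=
  tendsto_atTop_mono' atTop ((eventually_ne_atTop 0).mono fun _ hN =>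
      integral_norm_dirichletSum_pow_ge hp hN)
    (tendsto_natCast_atTop_atTop.atTop_div_const (by positivity))

lemma sum_exp_image_mul_eq_dirichletSum (N : ℕ) {k : ℕ} (hk : k ≠ 0) (x : ℝ) :
    ∑ h ∈ (range N).image (fun j : ℕ => (j : ℤ) * k), exp (2 * π * I * h * x) =
      dirichletSum N (k * x) := by
  rw [sum_image fun i _ j _ hij => by
    exact_mod_cast mul_right_cancel₀ (Int.natCast_ne_zero.mpr hk) hij]
  refine sum_congr rfl fun j _ => ?_
  push_cast
  ring_nf

lemma integral_norm_dirichletSum_comp_nat_mul (N p : ℕ) {k : ℕ} (hk : k ≠ 0) :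
    ∫ x in -(1 / 2)..1 / 2, ‖dirichletSum N (k * x)‖ ^ p =
      ∫ x in -(1 / 2)..1 / 2, ‖dirichletSum N x‖ ^ p := by
  have h := ((periodic_dirichletSum N).comp (‖·‖ ^ p)).intervalIntegral_comp_nat_mul
    ((continuous_dirichletSum N).norm.pow p).intervalIntegrable hk (-(1 / 2))
  rwa [show -(1 / 2 : ℝ) + 1 = 1 / 2 by norm_num] at h

lemma integral_norm_dirichletSum_comp_mul_le (N p : ℕ) {k a : ℝ} (hk : 0 < k) (ha : 0 ≤ a)
    (hka : k * a < 1) :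
    ∫ x in -a..a, ‖dirichletSum N (k * x)‖ ^ p ≤
      k⁻¹ * ((∫ x in -(1 / 2)..1 / 2, ‖dirichletSum N x‖ ^ p) + (2 * (1 - k * a))⁻¹ ^ p) := by
  rw [intervalIntegral.integral_comp_mul_left (fun x => ‖dirichletSum N x‖ ^ p) hk.ne',
    smul_eq_mul, mul_neg]
  gcongr
  refine ((periodic_dirichletSum N).comp (‖·‖ ^ p)).intervalIntegral_neg_self_le
    ((continuous_dirichletSum N).norm.pow p) (fun _ => pow_nonneg (norm_nonneg _) p)
    (mul_nonneg hk.le ha) hka (pow_nonneg (inv_nonneg.mpr (by linarith)) p)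
    fun s hs₁ hs₂ => pow_le_pow_left₀ (norm_nonneg _) ?_ p
  have hs : 0 < |s| := by linarith
  exact (norm_dirichletSum_le N hs₂ (abs_pos.mp hs)).trans (by gcongr)

theorem wiener_shapiro_sharp_general
    (p : ℕ) (hp_even : Even p) (hp_pos : 0 < p)
    (k : ℕ)
    (a : ℝ) (ha : 0 < a) (hak : a < 1 / k)
    (b : ℝ) (hb : 1 / k < b) :
    ∃ H : Finset ℤ, H.Nonempty ∧
      (∫ x in (-a)..a,
          ‖∑ h ∈ H, Complex.exp (2 * Real.pi * Complex.I * (h : ℂ) * (x : ℂ))‖ ^ p) ≤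
        b * ∫ x in (-(1 / 2) : ℝ)..(1 / 2 : ℝ),
          ‖∑ h ∈ H, Complex.exp (2 * Real.pi * Complex.I * (h : ℂ) * (x : ℂ))‖ ^ p := by
  have hp : 2 ≤ p := by obtain ⟨m, rfl⟩ := hp_even; omega
  have hk : (0 : ℝ) < k := one_div_pos.mp (ha.trans hak)
  have hk₀ : k ≠ 0 := Nat.cast_ne_zero.mp hk.ne'
  have hka : k * a < 1 := by rwa [lt_div_iff₀ hk, mul_comm] at hak
  have hkb : 0 < k * b - 1 := by rw [div_lt_iff₀ hk] at hb; linarith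
  set C : ℝ := (2 * (1 - k * a))⁻¹ ^ p
  obtain ⟨N, hNT, hN⟩ := (((tendsto_integral_norm_dirichletSum_pow hp).eventually_ge_atTop
    (C / (k * b - 1))).and (eventually_ne_atTop 0)).exists
  refine ⟨(range N).image (fun j : ℕ => (j : ℤ) * k), (nonempty_range_iff.mpr hN).image _, ?_⟩
  simp_rw [sum_exp_image_mul_eq_dirichletSum N hk₀, integral_norm_dirichletSum_comp_nat_mul N p hk₀]
  set T := ∫ x in -(1 / 2)..1 / 2, ‖dirichletSum N x‖ ^ p
  have hCT : C ≤ (k * b - 1) * T := by rwa [div_le_iff₀' hkb] at hNT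
  calc ∫ x in -a..a, ‖dirichletSum N (k * x)‖ ^ p ≤ (k : ℝ)⁻¹ * (T + C) :=
        integral_norm_dirichletSum_comp_mul_le N p hk ha.le hka
    _ ≤ (k : ℝ)⁻¹ * (T + (k * b - 1) * T) := by gcongr
    _ = b * T := by field_simp; ring

/-- **Sharpness of the constant 1/2 in the Wiener–Shapiro inequality, even for
idempotents.** For `p` a positive even integer and an integer `k > 2`, for every
`0 < a < 1/k` and every `b > 1/k` there exists a (nonzero) idempotent
trigonometric polynomial `f = ∑_{h ∈ H} e_h` such that
`∫_{-a}^{a} |f|^p ≤ b ∫_{-1/2}^{1/2} |f|^p`. -/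
theorem wiener_shapiro_sharp
    (p : ℕ) (hp_even : Even p) (hp_pos : 0 < p)
    (k : ℕ) (hk : 2 < k)
    (a : ℝ) (ha : 0 < a) (hak : a < 1 / k)
    (b : ℝ) (hb : 1 / k < b) :
    ∃ H : Finset ℤ, H.Nonempty ∧
      (∫ x in (-a)..a,
          ‖∑ h ∈ H, Complex.exp (2 * Real.pi * Complex.I * (h : ℂ) * (x : ℂ))‖ ^ p) ≤
        b * ∫ x in (-(1 / 2) : ℝ)..(1 / 2 : ℝ),
          ‖∑ h ∈ H, Complex.exp (2 * Real.pi * Complex.I * (h : ℂ) * (x : ℂ))‖ ^ p :=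
  wiener_shapiro_sharp_general p hp_even hp_pos k a ha hak b hb
end

section
/- Let p be a positive even integer, let k ≥ 2 be an integer, and let 0 < a < 1/k. For each n ≥ 1 let f_n(x) = ∑_{0 ≤ ν < n, k | ν} e^{2πiνx} (the convolution of the Dirichlet kernel D_n with the average μ_k of the Dirac masses at the k-th roots of unity). Then the ratio (∫_{-a}^{a} |f_n(x)|^p dx) / (∫_{-1/2}^{1/2} |f_n(x)|^p dx) tends to 1/k as n → ∞. -/
/-!
Summing only over multiples of `k` gives `f n x = D_M (k x)` with `M = ⌈n / k⌉`, where `D_M` is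
the Dirichlet kernel. After the substitution `u = k x` the numerator is
`k⁻¹ ∫_{-ka}^{ka} |D_M|^p`, and by `1`-periodicity of `D_M` the denominator is
`∫_{-1/2}^{1/2} |D_M|^p`. As `0 < ka < 1`, these two integrals differ only over a set bounded
away from `ℤ`, where `|D_M(u)| ≤ 2 / |e^{2πiu} - 1|` is bounded independently of `M`. On the
other hand `|D_M| ≥ M / 2` on `|u| ≤ 1 / (6M)`, so `∫_{-1/2}^{1/2} |D_M|^p ≳ M^{p-1} → ∞`
because `p ≥ 2`. Hence the ratio of the two integrals tends to `1`.
-/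

open MeasureTheory Finset Filter Real Asymptotics Topology

noncomputable def dirichletKernel (m : ℕ) (u : ℝ) : ℂ :=
  ∑ j ∈ range m, Complex.exp (2 * π * Complex.I * j * u)

lemma continuous_dirichletKernel (m : ℕ) : Continuous (dirichletKernel m) :=
  continuous_finsetSum _ fun _ _ => Complex.continuous_exp.comp (by fun_prop)

lemma dirichletKernel_periodic (m : ℕ) : Function.Periodic (dirichletKernel m) 1 := by
  intro u
  refine sum_congr rfl fun j _ => ?_
  rw [Complex.ofReal_add, Complex.ofReal_one, mul_add, mul_one, Complex.exp_add,
    show 2 * π * Complex.I * j = j * (2 * π * Complex.I) by ring,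
    Complex.exp_nat_mul_two_pi_mul_I, mul_one]

lemma re_dirichletKernel (m : ℕ) (u : ℝ) :
    (dirichletKernel m u).re = ∑ j ∈ range m, cos (2 * π * j * u) := by
  simp only [dirichletKernel, Complex.re_sum]
  refine sum_congr rfl fun j _ => ?_
  rw [show 2 * (π : ℂ) * Complex.I * j * u = ((2 * π * j * u : ℝ) : ℂ) * Complex.I by
    push_cast; ring, Complex.exp_ofReal_mul_I_re]

lemma dirichletKernel_eq_geom_sum (m : ℕ) (u : ℝ) :
    dirichletKernel m u = ∑ j ∈ range m, Complex.exp (2 * π * Complex.I * u) ^ j := by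
  refine sum_congr rfl fun j _ => ?_
  rw [← Complex.exp_nat_mul]
  ring_nf

lemma half_le_cos_of_abs_le {θ : ℝ} (h : |θ| ≤ π / 3) : 1 / 2 ≤ cos θ := by
  rw [← cos_abs, ← cos_pi_div_three]
  exact cos_le_cos_of_nonneg_of_le_pi (abs_nonneg θ) (by linarith [pi_pos]) h

lemma div_two_le_norm_dirichletKernel {m : ℕ} {u : ℝ} (hu : |u| ≤ 1 / (6 * m)) :
    (m : ℝ) / 2 ≤ ‖dirichletKernel m u‖ := by
  have hcos : ∀ j ∈ range m, (1 : ℝ) / 2 ≤ cos (2 * π * j * u) := by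
    intro j hj
    have hjm : j < m := mem_range.1 hj
    have hm : (0 : ℝ) < m := by exact_mod_cast hjm.pos
    apply half_le_cos_of_abs_le
    calc |2 * π * j * u| = 2 * π * j * |u| := by
          rw [abs_mul, abs_of_nonneg (by positivity)]
      _ ≤ 2 * π * m * (1 / (6 * m)) := by gcongr
      _ = π / 3 := by field_simp; ring
  calc (m : ℝ) / 2 = ∑ _j ∈ range m, (1 : ℝ) / 2 := by simp [div_eq_mul_inv]
    _ ≤ (dirichletKernel m u).re := by rw [re_dirichletKernel]; exact sum_le_sum hcos
    _ ≤ ‖dirichletKernel m u‖ := Complex.re_le_norm _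

lemma div_le_integral_norm_dirichletKernel_pow (p m : ℕ) :
    ((m : ℝ) / 2) ^ p / (3 * m) ≤ ∫ u in (-(1 / 2) : ℝ)..1 / 2, ‖dirichletKernel m u‖ ^ p := by
  set c : ℝ := 1 / (6 * m)
  have hc : 0 ≤ c := by positivity
  have hc' : c ≤ 1 / 2 := by
    rcases Nat.eq_zero_or_pos m with rfl | hm
    · simp [c]
    · have : (1 : ℝ) ≤ m := by exact_mod_cast hm
      exact one_div_le_one_div_of_le two_pos (by linarith)
  have hint : ∀ s t, IntervalIntegrable (fun u => ‖dirichletKernel m u‖ ^ p) volume s t :=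
    fun s t => ((continuous_dirichletKernel m).norm.pow p).intervalIntegrable s t
  calc ((m : ℝ) / 2) ^ p / (3 * m) = ∫ _ in -c..c, ((m : ℝ) / 2) ^ p := by
        rw [intervalIntegral.integral_const, smul_eq_mul]; ring
    _ ≤ ∫ u in -c..c, ‖dirichletKernel m u‖ ^ p :=
        intervalIntegral.integral_mono_on (by linarith) intervalIntegrable_const (hint _ _)
          fun u hu => pow_le_pow_left₀ (by positivity)
            (div_two_le_norm_dirichletKernel (abs_le.2 hu)) p
    _ ≤ _ := intervalIntegral.integral_mono_interval (by linarith) (by linarith) (by linarith)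
        (ae_of_all _ fun _ => by positivity) (hint _ _)

lemma tendsto_integral_norm_dirichletKernel_pow_atTop {p : ℕ} (hp : 2 ≤ p) :
    Tendsto (fun m : ℕ => ∫ u in (-(1 / 2) : ℝ)..1 / 2, ‖dirichletKernel m u‖ ^ p)
      atTop atTop := by
  refine tendsto_atTop_mono' _ ?_
    ((tendsto_natCast_atTop_atTop (R := ℝ)).atTop_div_const (by positivity : (0 : ℝ) < 3 * 2 ^ p))
  filter_upwards [eventually_ge_atTop 1] with m hm
  have hm' : (1 : ℝ) ≤ m := by exact_mod_cast hm
  refine le_trans ?_ (div_le_integral_norm_dirichletKernel_pow p m)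
  rw [div_pow, div_div, div_le_div_iff₀ (by positivity) (by positivity)]
  have : (m : ℝ) ^ 2 ≤ (m : ℝ) ^ p := pow_le_pow_right₀ hm' hp
  nlinarith [pow_pos (two_pos (α := ℝ)) p]

lemma norm_dirichletKernel_le {m : ℕ} {u : ℝ} (hu : cos (2 * π * u) < 1) :
    ‖dirichletKernel m u‖ ≤ 2 / (1 - cos (2 * π * u)) := by
  set z := Complex.exp (2 * π * Complex.I * u)
  have hz : z = Complex.exp ((2 * π * u : ℝ) * Complex.I) := by simp only [z]; push_cast; ring_nf
  have hz_norm : ‖z‖ = 1 := by rw [hz, Complex.norm_exp_ofReal_mul_I]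
  have hz_sub : 1 - cos (2 * π * u) ≤ ‖z - 1‖ := by
    calc 1 - cos (2 * π * u) = (1 - z).re := by
          rw [hz, Complex.sub_re, Complex.exp_ofReal_mul_I_re, Complex.one_re]
      _ ≤ ‖z - 1‖ := by rw [← norm_neg, neg_sub]; exact Complex.re_le_norm _
  have hz1 : z ≠ 1 := by
    rintro hz1
    rw [hz1, sub_self, norm_zero] at hz_sub
    linarith
  rw [dirichletKernel_eq_geom_sum, geom_sum_eq hz1, norm_div]
  have hnum : ‖z ^ m - 1‖ ≤ 2 := by
    calc ‖z ^ m - 1‖ ≤ ‖z ^ m‖ + ‖(1 : ℂ)‖ := norm_sub_le _ _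
      _ = 2 := by rw [norm_pow, hz_norm]; norm_num
  gcongr

lemma cos_two_pi_mul_le {d u : ℝ} (hd : 0 ≤ d) (h₁ : d ≤ |u|) (h₂ : |u| ≤ 1 - d) :
    cos (2 * π * u) ≤ cos (2 * π * d) := by
  have hπ := pi_pos
  rw [← cos_abs (2 * π * u), abs_mul, abs_of_pos two_pi_pos]
  rcases le_total |u| (1 / 2) with h | h
  · exact cos_le_cos_of_nonneg_of_le_pi (by positivity) (by nlinarith) (by gcongr)
  · rw [← cos_two_pi_sub, show 2 * π - 2 * π * |u| = 2 * π * (1 - |u|) by ring]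
    exact cos_le_cos_of_nonneg_of_le_pi (by positivity) (by nlinarith) (by gcongr; linarith)

lemma cos_two_pi_mul_lt_one {d : ℝ} (hd₀ : 0 < d) (hd : d ≤ 1 / 2) : cos (2 * π * d) < 1 := by
  rw [← cos_zero]
  exact cos_lt_cos_of_nonneg_of_le_pi le_rfl (by nlinarith [pi_pos]) (by positivity)

lemma norm_dirichletKernel_le_of_le_abs {m : ℕ} {d u : ℝ} (hd : 0 < d) (h₁ : d ≤ |u|)
    (h₂ : |u| ≤ 1 - d) :
    ‖dirichletKernel m u‖ ≤ 2 / (1 - cos (2 * π * d)) := by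
  have hd_lt := cos_two_pi_mul_lt_one hd (by linarith)
  have hu := cos_two_pi_mul_le hd.le h₁ h₂
  calc ‖dirichletKernel m u‖ ≤ 2 / (1 - cos (2 * π * u)) := norm_dirichletKernel_le (by linarith)
    _ ≤ 2 / (1 - cos (2 * π * d)) := by gcongr

lemma abs_integral_symm_sub_integral_symm_le {g : ℝ → ℝ} (hg : Continuous g) {b c B : ℝ}
    (hb : 0 ≤ b) (hc : 0 ≤ c) (hB : ∀ u, min b c ≤ |u| → |u| ≤ max b c → |g u| ≤ B) :
    |(∫ u in -b..b, g u) - ∫ u in -c..c, g u| ≤ 2 * B * |b - c| := by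
  have hint : ∀ s t, IntervalIntegrable g volume s t := hg.intervalIntegrable
  have hsplit : (∫ u in -b..b, g u) - ∫ u in -c..c, g u =
      (∫ u in -b..-c, g u) + ∫ u in c..b, g u := by
    rw [← intervalIntegral.integral_add_adjacent_intervals (hint (-b) (-c)) (hint (-c) b),
      ← intervalIntegral.integral_add_adjacent_intervals (hint (-c) c) (hint c b)]
    ring
  have hleft : ‖∫ u in -b..-c, g u‖ ≤ B * |-c - -b| :=
    intervalIntegral.norm_integral_le_of_norm_le_const fun u hu => by
      rw [Set.mem_uIoc] at hu
      refine hB u ?_ ?_ <;> rcases hu with ⟨h₁, h₂⟩ | ⟨h₁, h₂⟩ <;>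
        rw [abs_of_nonpos (by linarith)] <;> simp only [min_le_iff, le_max_iff] <;>
        first | (left; linarith) | (right; linarith)
  have hright : ‖∫ u in c..b, g u‖ ≤ B * |b - c| :=
    intervalIntegral.norm_integral_le_of_norm_le_const fun u hu => by
      rw [Set.mem_uIoc] at hu
      refine hB u ?_ ?_ <;> rcases hu with ⟨h₁, h₂⟩ | ⟨h₁, h₂⟩ <;>
        rw [abs_of_pos (by linarith)] <;> simp only [min_le_iff, le_max_iff] <;>
        first | (left; linarith) | (right; linarith)
  rw [hsplit, show -c - -b = b - c by ring] at *
  calc _ ≤ ‖∫ u in -b..-c, g u‖ + ‖∫ u in c..b, g u‖ := abs_add_le _ _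
    _ ≤ _ := by linarith

lemma tendsto_div_of_abs_sub_le {α : Type*} {l : Filter α} {f g : α → ℝ}
    (hg : Tendsto g l atTop) {C : ℝ} (hC : ∀ x, |f x - g x| ≤ C) :
    Tendsto (fun x => f x / g x) l (𝓝 1) := by
  have h_one : (fun _ => (1 : ℝ)) =o[l] g :=
    (isLittleO_one_left_iff ℝ).2 (tendsto_norm_atTop_atTop.comp hg)
  have h_sub : (f - g) =O[l] (fun _ => (1 : ℝ)) :=
    IsBigO.of_bound C (Eventually.of_forall fun x => by simpa using hC x)
  exact (isEquivalent_iff_tendsto_one (hg.eventually_ne_atTop 0)).1 (h_sub.trans_isLittleO h_one)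

lemma Function.Periodic.intervalIntegral_comp_natCast_mul {g : ℝ → ℝ}
    (hg : Function.Periodic g 1) (hint : ∀ s t, IntervalIntegrable g volume s t) {k : ℕ}
    (hk : k ≠ 0) (t : ℝ) :
    ∫ x in t..t + 1, g (k * x) = ∫ x in t..t + 1, g x := by
  have hk' : (k : ℝ) ≠ 0 := Nat.cast_ne_zero.2 hk
  rw [intervalIntegral.integral_comp_mul_left g hk', mul_add, mul_one,
    show (k : ℝ) * t + k = k * t + (k : ℤ) • (1 : ℝ) by simp,
    hg.intervalIntegral_add_zsmul_eq _ _ hint, hg.intervalIntegral_add_eq (k * t) t,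
    zsmul_eq_mul, smul_eq_mul, Int.cast_natCast, inv_mul_cancel_left₀ hk']

lemma integral_norm_dirichletKernel_natCast_mul_pow (p m : ℕ) {k : ℕ} (hk : k ≠ 0) :
    ∫ x in (-(1 / 2) : ℝ)..1 / 2, ‖dirichletKernel m (k * x)‖ ^ p =
      ∫ u in (-(1 / 2) : ℝ)..1 / 2, ‖dirichletKernel m u‖ ^ p := by
  have := ((dirichletKernel_periodic m).comp (‖·‖ ^ p)).intervalIntegral_comp_natCast_mul
    ((continuous_dirichletKernel m).norm.pow p).intervalIntegrable hk (-(1 / 2))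
  norm_num at this ⊢
  exact this

lemma exists_abs_integral_norm_dirichletKernel_pow_sub_le (p : ℕ) {b : ℝ} (hb₀ : 0 < b)
    (hb₁ : b < 1) :
    ∃ C, ∀ m : ℕ, |(∫ u in -b..b, ‖dirichletKernel m u‖ ^ p) -
      ∫ u in (-(1 / 2) : ℝ)..1 / 2, ‖dirichletKernel m u‖ ^ p| ≤ C := by
  set d := min b (1 - b)
  have hd : 0 < d := lt_min hb₀ (by linarith)
  refine ⟨2 * (2 / (1 - cos (2 * π * d))) ^ p * |b - 1 / 2|, fun m => ?_⟩
  refine abs_integral_symm_sub_integral_symm_le (g := fun u => ‖dirichletKernel m u‖ ^ p)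
    ((continuous_dirichletKernel m).norm.pow p) hb₀.le (by norm_num) fun u h₁ h₂ => ?_
  have hd_half : d ≤ 1 / 2 := by
    rcases le_total b (1 / 2) with h | h
    · exact (min_le_left _ _).trans h
    · exact (min_le_right _ _).trans (by linarith)
  rw [abs_pow, abs_norm]
  refine pow_le_pow_left₀ (norm_nonneg _) (norm_dirichletKernel_le_of_le_abs hd ?_ ?_) p
  · exact (le_min (min_le_left _ _) hd_half).trans h₁
  · exact h₂.trans (max_le (by linarith [min_le_right b (1 - b)]) (by linarith))

lemma range_filter_dvd_eq_map {k : ℕ} (hk : 0 < k) (n : ℕ) :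
    (range n).filter (k ∣ ·) = (range (n ⌈/⌉ k)).map ⟨(k * ·), mul_right_injective₀ hk.ne'⟩ := by
  ext ν
  have hlt : ∀ j, j < n ⌈/⌉ k ↔ k * j < n := fun j =>
    lt_iff_lt_of_le_iff_le (ceilDiv_le_iff_le_mul hk)
  simp only [mem_filter, Finset.mem_map, mem_range, Function.Embedding.coeFn_mk]
  constructor
  · rintro ⟨hν, j, rfl⟩
    exact ⟨j, (hlt j).2 hν, rfl⟩
  · rintro ⟨j, hj, rfl⟩
    exact ⟨(hlt j).1 hj, j, rfl⟩

lemma tendsto_ceilDiv_atTop {k : ℕ} (hk : 0 < k) : Tendsto (fun n : ℕ => n ⌈/⌉ k) atTop atTop :=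
  tendsto_atTop_mono (fun n => (floorDiv_le_ceilDiv : n ⌊/⌋ k ≤ n ⌈/⌉ k))
    (Nat.tendsto_div_const_atTop hk.ne')

lemma sum_filter_dvd_exp_eq_dirichletKernel {k : ℕ} (hk : 0 < k) (n : ℕ) (x : ℝ) :
    ∑ ν ∈ (range n).filter (k ∣ ·), Complex.exp (2 * π * Complex.I * ν * x) =
      dirichletKernel (n ⌈/⌉ k) (k * x) := by
  rw [range_filter_dvd_eq_map hk, sum_map]
  refine sum_congr rfl fun j _ => ?_
  simp only [Function.Embedding.coeFn_mk]
  push_cast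
  ring_nf

/-- For `p` a positive even integer, `k ≥ 2` and `0 < a < 1/k`, the idempotents
`f_n(x) = ∑_{0 ≤ ν < n, k ∣ ν} e^{2πiνx}` (the Dirichlet kernel `D_n` convolved
with the average of Dirac masses at the `k`-th roots of unity) satisfy
`(∫_{-a}^{a} |f_n|^p) / (∫_{-1/2}^{1/2} |f_n|^p) → 1/k` as `n → ∞`. -/
theorem ratio_tendsto_one_div_k
    (p : ℕ) (hp_even : Even p) (hp_pos : 0 < p)
    (k : ℕ) (hk : 2 ≤ k)
    (a : ℝ) (ha : 0 < a) (hak : a < 1 / k)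
    (f : ℕ → ℝ → ℂ)
    (hf : ∀ n : ℕ, ∀ x : ℝ, f n x =
      ∑ ν ∈ (Finset.range n).filter (fun ν => k ∣ ν),
        Complex.exp (2 * Real.pi * Complex.I * (ν : ℂ) * (x : ℂ))) :
    Tendsto (fun n : ℕ =>
        (∫ x in (-a)..a, ‖f n x‖ ^ p) /
          ∫ x in (-(1 / 2) : ℝ)..(1 / 2 : ℝ), ‖f n x‖ ^ p)
      atTop (nhds (1 / k)) := by
  have hk₀ : 0 < k := by omega
  have hp : 2 ≤ p := by obtain ⟨t, rfl⟩ := hp_even; omega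
  have hkR : (0 : ℝ) < k := by exact_mod_cast hk₀
  have hb₁ : k * a < 1 := by rwa [lt_div_iff₀ hkR, mul_comm] at hak
  have hfD : ∀ n x, ‖f n x‖ ^ p = ‖dirichletKernel (n ⌈/⌉ k) (k * x)‖ ^ p := fun n x => by
    rw [hf, sum_filter_dvd_exp_eq_dirichletKernel hk₀]
  have hnum : ∀ n, ∫ x in (-a)..a, ‖f n x‖ ^ p =
      (k : ℝ)⁻¹ * ∫ u in -(k * a)..k * a, ‖dirichletKernel (n ⌈/⌉ k) u‖ ^ p := by
    intro n
    simp_rw [hfD]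
    rw [intervalIntegral.integral_comp_mul_left (fun u => ‖dirichletKernel _ u‖ ^ p) hkR.ne',
      smul_eq_mul, mul_neg]
  have hden : ∀ n, ∫ x in (-(1 / 2) : ℝ)..(1 / 2 : ℝ), ‖f n x‖ ^ p =
      ∫ u in (-(1 / 2) : ℝ)..1 / 2, ‖dirichletKernel (n ⌈/⌉ k) u‖ ^ p := by
    intro n
    simp_rw [hfD]
    exact integral_norm_dirichletKernel_natCast_mul_pow p _ hk₀.ne'
  obtain ⟨C, hC⟩ := exists_abs_integral_norm_dirichletKernel_pow_sub_le p (by positivity) hb₁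
  have hratio := tendsto_div_of_abs_sub_le (tendsto_integral_norm_dirichletKernel_pow_atTop hp) hC
  have := (hratio.comp (tendsto_ceilDiv_atTop hk₀)).const_mul (k : ℝ)⁻¹
  simp only [Function.comp_def, mul_one, ← mul_div_assoc, ← hnum, ← hden] at this
  simpa using this
end

section
/- Let N ≥ 1 and n ≥ 1 be integers, let a ∈ ℝ, and let η_0, …, η_{n-1} ∈ {−1, +1}. Let Δ be the 1-periodic function with Δ(t) = max(1 − 2N|t|, 0) for |t| ≤ 1/2, let g(t) = ∑_{k=0}^{n-1} η_k e^{2πikt}, and let G = D_n be the Dirichlet kernel. Then the 1-periodic function f(t) = Δ(t−a) g(2Nt) + Δ(t+a) g(2Nt) + 2 Δ(t) G(2Nt) has all its Fourier coefficients nonnegative real numbers, i.e., f is positive definite. -/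
/-!
Multiplying by `e^{2πi·2Nk t}` shifts Fourier coefficients by `2Nk`, so `f̂(m)` is a sum over `k`
of the coefficients of `η_k (Δ(· - a) + Δ(· + a)) + 2Δ` at `j = m - 2Nk`. Translating by `±a`
multiplies `Δ̂(j)` by `e^{∓2πija}`, so each of these equals `2 (η_k cos(2πja) + 1) Δ̂(j)`, a
nonnegative multiple of `Δ̂(j)` because `|η_k| ≤ 1`. Since `Δ` is even,
`Δ̂(j) = 2 ∫_0^{1/(2N)} (1 - 2Nt) cos(2πjt) dt`, which is `N (1 - cos(πj/N)) / (πj)² ≥ 0`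
for `j ≠ 0` and `1/(2N)` for `j = 0`.
-/

open MeasureTheory Finset Complex intervalIntegral
open scoped Real

lemma norm_coe_addCircle_one (x : ℝ) : ‖(x : AddCircle (1 : ℝ))‖ = |x - round x| := by
  simp [AddCircle.norm_eq]

lemma continuous_abs_sub_round : Continuous fun x : ℝ => |x - round x| := by
  simp_rw [← norm_coe_addCircle_one]
  exact continuous_norm.comp (AddCircle.continuous_mk' (1 : ℝ))

lemma abs_neg_sub_round_neg (x : ℝ) : |-x - round (-x)| = |x - round x| := by
  rw [← norm_coe_addCircle_one, ← norm_coe_addCircle_one, AddCircle.coe_neg, norm_neg]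

lemma abs_sub_round_of_mem_Icc {x : ℝ} (hx : x ∈ Set.Icc (0 : ℝ) (1 / 2)) :
    |x - round x| = x := by
  rw [abs_sub_round_eq_min, Int.fract_eq_self.mpr ⟨hx.1, by linarith [hx.2]⟩,
    min_eq_left (by linarith [hx.2])]

lemma integral_one_sub_mul_mul_cos {s θ : ℝ} (hs : 0 < s) (hθ : θ ≠ 0) :
    ∫ t in (0 : ℝ)..s⁻¹, (1 - s * t) * Real.cos (θ * t)
      = s * (1 - Real.cos (θ / s)) / θ ^ 2 := by
  have hderiv : ∀ t : ℝ, HasDerivAt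
      (fun t => (1 - s * t) * Real.sin (θ * t) / θ - s * Real.cos (θ * t) / θ ^ 2)
      ((1 - s * t) * Real.cos (θ * t)) t := by
    intro t
    have h := ((((hasDerivAt_id' t).const_mul s).const_sub 1).fun_mul
      (((hasDerivAt_id' t).const_mul θ).sin)).div_const θ |>.fun_sub
      ((((hasDerivAt_id' t).const_mul θ).cos.const_mul s).div_const (θ ^ 2))
    refine h.congr_deriv ?_
    field_simp
    ring
  rw [integral_eq_sub_of_hasDerivAt (fun t _ => hderiv t)
    (Continuous.intervalIntegrable (by fun_prop) _ _)]
  simp only [div_eq_mul_inv, mul_zero, sub_zero, Real.sin_zero, zero_mul, Real.cos_zero, mul_one,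
    zero_sub, sub_neg_eq_add]
  field_simp
  ring

lemma integral_one_sub_mul_mul_cos_nonneg {s : ℝ} (hs : 0 < s) (θ : ℝ) :
    0 ≤ ∫ t in (0 : ℝ)..s⁻¹, (1 - s * t) * Real.cos (θ * t) := by
  rcases eq_or_ne θ 0 with rfl | hθ
  · simp only [zero_mul, Real.cos_zero, mul_one]
    refine integral_nonneg (by positivity) fun t ht => ?_
    have : s * t ≤ 1 := by simpa [hs.ne'] using mul_le_mul_of_nonneg_left ht.2 hs.le
    linarith
  · rw [integral_one_sub_mul_mul_cos hs hθ]
    have : 0 ≤ 1 - Real.cos (θ / s) := sub_nonneg.mpr (Real.cos_le_one _)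
    positivity

lemma integral_tent_mul_cos_nonneg {s c : ℝ} (hs : 0 < s) (hsc : s⁻¹ ≤ c) (θ : ℝ) :
    0 ≤ ∫ t in (0 : ℝ)..c, max (1 - s * t) 0 * Real.cos (θ * t) := by
  have hcont : Continuous fun t : ℝ => max (1 - s * t) 0 * Real.cos (θ * t) := by fun_prop
  have hleft : ∫ t in (0 : ℝ)..s⁻¹, max (1 - s * t) 0 * Real.cos (θ * t)
      = ∫ t in (0 : ℝ)..s⁻¹, (1 - s * t) * Real.cos (θ * t) := by
    refine integral_congr fun t ht => ?_
    rw [Set.uIcc_of_le (by positivity)] at ht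
    have : s * t ≤ 1 := by simpa [hs.ne'] using mul_le_mul_of_nonneg_left ht.2 hs.le
    simp only [max_eq_left (sub_nonneg.mpr this)]
  have hright : ∫ t in s⁻¹..c, max (1 - s * t) 0 * Real.cos (θ * t) = 0 := by
    refine (integral_congr fun t ht => ?_).trans integral_zero
    rw [Set.uIcc_of_le hsc] at ht
    have : 1 ≤ s * t := by simpa [hs.ne'] using mul_le_mul_of_nonneg_left ht.1 hs.le
    simp only [max_eq_right (sub_nonpos.mpr this), zero_mul]
  rw [← integral_add_adjacent_intervals (b := s⁻¹) (hcont.intervalIntegrable _ _)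
    (hcont.intervalIntegrable _ _), hleft, hright, add_zero]
  exact integral_one_sub_mul_mul_cos_nonneg hs θ

lemma integral_ofReal_mul_exp_of_even {φ : ℝ → ℝ} (hφ : Continuous φ)
    (heven : ∀ t, φ (-t) = φ t) (x c : ℝ) :
    ∫ t in -c..c, (φ t : ℂ) * exp (-(2 * π * I * x * t))
      = ↑(2 * ∫ t in (0 : ℝ)..c, φ t * Real.cos (2 * π * x * t)) := by
  set F : ℝ → ℂ := fun t => (φ t : ℂ) * exp (-(2 * π * I * x * t))
  have hF : Continuous F := by fun_prop
  have hneg : ∫ t in -c..0, F t = ∫ t in (0 : ℝ)..c, F (-t) := by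
    rw [integral_comp_neg, neg_zero]
  rw [← integral_add_adjacent_intervals (b := 0) (hF.intervalIntegrable _ _)
    (hF.intervalIntegrable _ _), hneg, ← integral_add
    ((show Continuous fun t => F (-t) by fun_prop).intervalIntegrable 0 c)
    (hF.intervalIntegrable _ _),
    ← intervalIntegral.integral_const_mul, ← intervalIntegral.integral_ofReal]
  refine integral_congr fun t _ => ?_
  simp only [F, heven, Complex.ofReal_mul, Complex.ofReal_cos, Complex.cos]
  push_cast
  ring_nf

noncomputable def unitFourierCoeff (h : ℝ → ℂ) (m : ℤ) : ℂ :=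
  ∫ t in (0 : ℝ)..1, h t * exp (-(2 * π * I * m * t))

section unitFourierCoeff

variable {h k : ℝ → ℂ}

lemma unitFourierCoeff_add (hh : IntervalIntegrable h volume 0 1)
    (hk : IntervalIntegrable k volume 0 1) (m : ℤ) :
    unitFourierCoeff (fun t => h t + k t) m = unitFourierCoeff h m + unitFourierCoeff k m := by
  simp only [unitFourierCoeff, add_mul]
  exact intervalIntegral.integral_add (hh.mul_continuousOn (by fun_prop))
    (hk.mul_continuousOn (by fun_prop))

lemma unitFourierCoeff_const_mul (c : ℂ) (m : ℤ) :
    unitFourierCoeff (fun t => c * h t) m = c * unitFourierCoeff h m := by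
  simp only [unitFourierCoeff, mul_assoc, intervalIntegral.integral_const_mul]

lemma unitFourierCoeff_sum {ι : Type*} (s : Finset ι) {F : ι → ℝ → ℂ}
    (hF : ∀ i ∈ s, IntervalIntegrable (F i) volume 0 1) (m : ℤ) :
    unitFourierCoeff (fun t => ∑ i ∈ s, F i t) m = ∑ i ∈ s, unitFourierCoeff (F i) m := by
  simp only [unitFourierCoeff, sum_mul]
  exact intervalIntegral.integral_finsetSum fun i hi => (hF i hi).mul_continuousOn (by fun_prop)

lemma unitFourierCoeff_mul_exp (j m : ℤ) :
    unitFourierCoeff (fun t => h t * exp (2 * π * I * j * t)) m = unitFourierCoeff h (m - j) := by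
  refine intervalIntegral.integral_congr fun t _ => ?_
  rw [mul_assoc, ← exp_add]
  push_cast
  ring_nf

lemma periodic_mul_exp (hh : Function.Periodic h 1) (m : ℤ) :
    Function.Periodic (fun t => h t * exp (-(2 * π * I * m * t))) 1 := by
  intro t
  have : exp (-(2 * π * I * m * (t + 1 : ℝ))) = exp (-(2 * π * I * m * t)) :=
    calc exp (-(2 * π * I * m * (t + 1 : ℝ)))
        = exp (-(2 * π * I * m * t)) * exp ((-m : ℤ) * (2 * π * I)) := by
          rw [← exp_add]; push_cast; ring_nf
      _ = exp (-(2 * π * I * m * t)) := by rw [exp_int_mul_two_pi_mul_I, mul_one]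
  simp only [hh t, this]

lemma unitFourierCoeff_eq_integral_of_periodic (hh : Function.Periodic h 1) (m : ℤ) (s : ℝ) :
    unitFourierCoeff h m = ∫ t in s..s + 1, h t * exp (-(2 * π * I * m * t)) := by
  have h01 := (periodic_mul_exp hh m).intervalIntegral_add_eq 0 s
  rwa [zero_add] at h01

lemma unitFourierCoeff_comp_sub (hh : Function.Periodic h 1) (b : ℝ) (m : ℤ) :
    unitFourierCoeff (fun t => h (t - b)) m
      = exp (-(2 * π * I * m * b)) * unitFourierCoeff h m := by
  have hshift : ∀ t : ℝ, h (t - b) * exp (-(2 * π * I * m * t))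
      = exp (-(2 * π * I * m * b)) * (h (t - b) * exp (-(2 * π * I * m * (t - b : ℝ)))) := by
    intro t
    rw [mul_left_comm, ← exp_add]
    push_cast
    ring_nf
  rw [unitFourierCoeff, funext hshift, intervalIntegral.integral_const_mul,
    intervalIntegral.integral_comp_sub_right (fun t => h t * exp (-(2 * π * I * m * t))),
    unitFourierCoeff_eq_integral_of_periodic hh m (0 - b), sub_add_comm, add_zero]

lemma unitFourierCoeff_comp_sub_add_comp_add (hh : Function.Periodic h 1) (hc : Continuous h)
    (a : ℝ) (m : ℤ) :
    unitFourierCoeff (fun t => h (t - a) + h (t + a)) m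
      = 2 * Real.cos (2 * π * m * a) * unitFourierCoeff h m := by
  have hplus : (fun t => h (t + a)) = fun t => h (t - -a) := by simp_rw [sub_neg_eq_add]
  rw [unitFourierCoeff_add ((by fun_prop : Continuous fun t => h (t - a)).intervalIntegrable 0 1)
    ((by fun_prop : Continuous fun t => h (t + a)).intervalIntegrable 0 1), hplus,
    unitFourierCoeff_comp_sub hh, unitFourierCoeff_comp_sub hh, ← add_mul, Complex.ofReal_cos,
    Complex.two_cos]
  push_cast
  ring_nf

end unitFourierCoeff

-- `0 ≤ z` for `z : ℂ` means that `z` is a nonnegative real number.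
open scoped ComplexOrder

lemma zero_le_unitFourierCoeff_glue {h : ℝ → ℂ} (hh : Function.Periodic h 1)
    (hc : Continuous h) (hpos : ∀ m, 0 ≤ unitFourierCoeff h m) {η : ℝ} (hη : |η| ≤ 1)
    (a : ℝ) (m : ℤ) :
    0 ≤ unitFourierCoeff (fun t => η * (h (t - a) + h (t + a)) + 2 * h t) m := by
  rw [unitFourierCoeff_add ((by fun_prop : Continuous _).intervalIntegrable 0 1)
      ((by fun_prop : Continuous _).intervalIntegrable 0 1),
    unitFourierCoeff_const_mul, unitFourierCoeff_const_mul,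
    unitFourierCoeff_comp_sub_add_comp_add hh hc, ← mul_assoc, ← add_mul]
  have hcos : -1 ≤ η * Real.cos (2 * π * m * a) := neg_le_of_abs_le <|
    (abs_mul _ _).trans_le (mul_le_one₀ hη (abs_nonneg _) (Real.abs_cos_le_one _))
  refine mul_nonneg ?_ (hpos m)
  exact_mod_cast (show (0 : ℝ) ≤ η * (2 * Real.cos (2 * π * m * a)) + 2 by linarith)

noncomputable def triangle (N : ℕ) (t : ℝ) : ℝ := max (1 - 2 * N * |t - round t|) 0

lemma triangle_periodic (N : ℕ) : Function.Periodic (triangle N) 1 := by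
  intro t
  simp only [triangle, round_add_one, Int.cast_add, Int.cast_one, add_sub_add_right_eq_sub]

@[fun_prop]
lemma continuous_triangle (N : ℕ) : Continuous (triangle N) :=
  (continuous_const.sub (continuous_const.mul continuous_abs_sub_round)).max continuous_const

lemma triangle_neg (N : ℕ) (t : ℝ) : triangle N (-t) = triangle N t := by
  simp only [triangle, abs_neg_sub_round_neg]

lemma zero_le_unitFourierCoeff_triangle {N : ℕ} (hN : 1 ≤ N) (m : ℤ) :
    0 ≤ unitFourierCoeff (fun t => (triangle N t : ℂ)) m := by
  have hsym := integral_ofReal_mul_exp_of_even (continuous_triangle N) (triangle_neg N) m (1 / 2)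
  rw [Complex.ofReal_intCast] at hsym
  have hper : Function.Periodic (fun t => (triangle N t : ℂ)) 1 :=
    (triangle_periodic N).comp ((↑) : ℝ → ℂ)
  rw [unitFourierCoeff_eq_integral_of_periodic hper m (-(1 / 2)),
    show -(1 / 2) + 1 = (1 / 2 : ℝ) by norm_num, hsym]
  have htent : ∫ t in (0 : ℝ)..1 / 2, triangle N t * Real.cos (2 * π * m * t)
      = ∫ t in (0 : ℝ)..1 / 2, max (1 - 2 * N * t) 0 * Real.cos (2 * π * m * t) := by
    refine integral_congr fun t ht => ?_
    rw [Set.uIcc_of_le (by norm_num)] at ht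
    rw [triangle, abs_sub_round_of_mem_Icc ht]
  rw [htent]
  have hN' : (1 : ℝ) ≤ N := by exact_mod_cast hN
  refine Complex.zero_le_real.mpr (mul_nonneg zero_le_two (integral_tent_mul_cos_nonneg ?_ ?_ _))
  · positivity
  · rw [one_div, inv_le_inv₀ (by positivity) two_pos]
    linarith

theorem triangle_glued_polynomial_posdef_general
    (N n : ℕ) (hN : 1 ≤ N) (a : ℝ)
    (η : ℕ → ℝ) (hη : ∀ k < n, η k = 1 ∨ η k = -1)
    (Δ : ℝ → ℝ)
    (hΔ : ∀ t : ℝ, Δ t = max (1 - 2 * N * |t - (round t : ℝ)|) 0)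
    (g G : ℝ → ℂ)
    (hg : ∀ t : ℝ, g t =
      ∑ k ∈ Finset.range n, (η k : ℂ) * Complex.exp (2 * Real.pi * Complex.I * (k : ℂ) * (t : ℂ)))
    (hG : ∀ t : ℝ, G t =
      ∑ k ∈ Finset.range n, Complex.exp (2 * Real.pi * Complex.I * (k : ℂ) * (t : ℂ)))
    (f : ℝ → ℂ)
    (hf : ∀ t : ℝ, f t =
      (Δ (t - a) : ℂ) * g (2 * N * t) + (Δ (t + a) : ℂ) * g (2 * N * t)
        + 2 * (Δ t : ℂ) * G (2 * N * t)) :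
    ∀ m : ℤ,
      0 ≤ (∫ t in (0 : ℝ)..1, f t * Complex.exp (-(2 * Real.pi * Complex.I * (m : ℂ) * (t : ℂ)))).re ∧
      (∫ t in (0 : ℝ)..1, f t * Complex.exp (-(2 * Real.pi * Complex.I * (m : ℂ) * (t : ℂ)))).im = 0 := by
  intro m
  obtain rfl : Δ = triangle N := funext hΔ
  have hper : Function.Periodic (fun t => (triangle N t : ℂ)) 1 :=
    (triangle_periodic N).comp ((↑) : ℝ → ℂ)
  have hexpand : f = fun t => ∑ k ∈ range n,
      ((η k : ℂ) * ((triangle N (t - a) : ℂ) + triangle N (t + a)) + 2 * triangle N t)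
        * exp (2 * π * I * (2 * N * k : ℤ) * t) := by
    funext t
    rw [hf, hg, hG, mul_sum, mul_sum, mul_sum, ← sum_add_distrib, ← sum_add_distrib]
    refine sum_congr rfl fun k _ => ?_
    push_cast
    ring_nf
  refine (Complex.nonneg_iff.mp ?_).imp_right Eq.symm
  change 0 ≤ unitFourierCoeff f m
  rw [hexpand,
    unitFourierCoeff_sum _ fun k _ => (by fun_prop : Continuous _).intervalIntegrable 0 1]
  refine sum_nonneg fun k hk => ?_
  rw [unitFourierCoeff_mul_exp]
  refine zero_le_unitFourierCoeff_glue hper (by fun_prop)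
    (zero_le_unitFourierCoeff_triangle hN) ?_ a _
  rcases hη k (mem_range.mp hk) with h | h <;> simp [h]

/-- The building block of Bonami–Révész is positive definite: with `Δ` the
1-periodic triangle function `Δ(t) = max(1 − 2N|t|, 0)` (for `|t| ≤ 1/2`),
`g(t) = ∑_{k<n} η_k e^{2πikt}` for signs `η_k = ±1`, and `G = D_n` the Dirichlet
kernel, the function `f(t) = Δ(t−a) g(2Nt) + Δ(t+a) g(2Nt) + 2 Δ(t) G(2Nt)`
has all its Fourier coefficients nonnegative real. -/
theorem triangle_glued_polynomial_posdef
    (N n : ℕ) (hN : 1 ≤ N) (hn : 1 ≤ n) (a : ℝ)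
    (η : ℕ → ℝ) (hη : ∀ k < n, η k = 1 ∨ η k = -1)
    (Δ : ℝ → ℝ)
    (hΔ : ∀ t : ℝ, Δ t = max (1 - 2 * N * |t - (round t : ℝ)|) 0)
    (g G : ℝ → ℂ)
    (hg : ∀ t : ℝ, g t =
      ∑ k ∈ Finset.range n, (η k : ℂ) * Complex.exp (2 * Real.pi * Complex.I * (k : ℂ) * (t : ℂ)))
    (hG : ∀ t : ℝ, G t =
      ∑ k ∈ Finset.range n, Complex.exp (2 * Real.pi * Complex.I * (k : ℂ) * (t : ℂ)))
    (f : ℝ → ℂ)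
    (hf : ∀ t : ℝ, f t =
      (Δ (t - a) : ℂ) * g (2 * N * t) + (Δ (t + a) : ℂ) * g (2 * N * t)
        + 2 * (Δ t : ℂ) * G (2 * N * t)) :
    ∀ m : ℤ,
      0 ≤ (∫ t in (0 : ℝ)..1, f t * Complex.exp (-(2 * Real.pi * Complex.I * (m : ℂ) * (t : ℂ)))).re ∧
      (∫ t in (0 : ℝ)..1, f t * Complex.exp (-(2 * Real.pi * Complex.I * (m : ℂ) * (t : ℂ)))).im = 0 :=
  triangle_glued_polynomial_posdef_general N n hN a η hη Δ hΔ g G hg hG f hf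
end

section
/- Let p > 2 with p not an even integer, and let j be an odd integer with j > p/2. Then the trigonometric polynomials G_0 = (1 + e_j)(1 + e_{j+1}) and g_0 = (1 + e_j)(1 − e_{j+1}) satisfy ‖G_0‖_{L^p(𝕋)} < ‖g_0‖_{L^p(𝕋)}. (This is the failure of the Hardy–Littlewood majorant property: the Fourier coefficients of g_0 are majorized in absolute value by those of G_0, yet g_0 has the larger L^p norm.) -/
/-!
Write `φ(y) = |2 cos πy|^p = ‖1 + e(y)‖^p`, so that `‖G₀‖_p^p = ∫ φ(jx) φ((j+1)x)` and
`‖g₀‖_p^p = ∫ φ(jx) φ((j+1)x - 1/2)`. Since `(2 cos πx)^(p+1) sin((2n+1)πx)` vanishes at `±1/2`, integrating its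
derivative gives the recursion `(p + 2n + 2) γ_{n+1} = (p - 2n) γ_n` for the Fourier coefficients
`γ_n` of `φ`. Hence `γ_n` never vanishes when `p` is not an even integer, is `O(n⁻²)`, and
alternates in sign once `n > p/2`. As `j` and `j + 1` are coprime, expanding both factors in Fourier
series gives `‖G₀‖_p^p = ∑_s γ_{|s(j+1)|} γ_{|sj|}`, and the half-period shift multiplies the `s`-th
term by `(-1)^{sj}`. For odd `s` the two indices exceed `p/2` and differ by the odd number `|s|`, so
these terms are negative and flipping their sign strictly increases the sum.
-/

open MeasureTheory
open scoped Real
open Complex (exp I)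

theorem norm_one_add_exp (y : ℝ) : ‖1 + exp (2 * π * I * y)‖ = |2 * Real.cos (π * y)| := by
  have h : 1 + exp (2 * π * I * y) = exp ((π * y : ℝ) * I) * (2 * Real.cos (π * y) : ℝ) := by
    push_cast
    rw [Complex.two_cos, mul_add, ← Complex.exp_add, ← Complex.exp_add]
    ring_nf
    rw [Complex.exp_zero, add_comm]
  rw [h, norm_mul, Complex.norm_exp_ofReal_mul_I, one_mul, Complex.norm_real, Real.norm_eq_abs]

theorem norm_exp_two_pi_I_int_mul (k : ℤ) (y : ℝ) : ‖exp (2 * π * I * k * y)‖ = 1 := by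
  rw [show 2 * π * I * k * y = ((2 * π * k * y : ℝ) : ℂ) * I by push_cast; ring]
  exact Complex.norm_exp_ofReal_mul_I _

theorem integral_exp_two_pi_I_int_mul (k : ℤ) :
    ∫ x in (0 : ℝ)..1, exp (2 * π * I * k * x) = if k = 0 then 1 else 0 := by
  split_ifs with hk
  · simp [hk]
  · have hc : 2 * π * I * k ≠ 0 := by simp [hk, Real.pi_ne_zero, Complex.I_ne_zero]
    have hperiod : exp (2 * π * I * k * (1 : ℝ)) = 1 := by
      rw [Complex.ofReal_one, mul_one, mul_comm]
      exact Complex.exp_int_mul_two_pi_mul_I k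
    rw [integral_exp_mul_complex hc, hperiod, Complex.ofReal_zero, mul_zero, Complex.exp_zero,
      sub_self, zero_div]

theorem summable_of_abs_mul_sq_le {u : ℕ → ℝ} {N : ℕ}
    (h : ∀ n ≥ N, |u (n + 1)| * (n + 1) ^ 2 ≤ |u n| * n ^ 2) : Summable u := by
  have hbound : ∀ n ≥ N, |u n| * n ^ 2 ≤ |u N| * N ^ 2 := by
    intro n hn
    induction n, hn using Nat.le_induction with
    | base => rfl
    | succ n hn ih => exact_mod_cast (h n hn).trans ih
  refine summable_of_isBigO_nat (Real.summable_one_div_nat_pow.mpr one_lt_two) ?_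
  refine Asymptotics.IsBigO.of_bound (|u N| * N ^ 2) ?_
  filter_upwards [Filter.eventually_ge_atTop (max N 1)] with n hn
  have hn0 : (0 : ℝ) < n := by exact_mod_cast (le_max_right N 1).trans hn
  rw [Real.norm_eq_abs, Real.norm_of_nonneg (by positivity), mul_one_div,
    le_div_iff₀ (by positivity)]
  exact hbound n ((le_max_left N 1).trans hn)

theorem hasSum_fourier_of_periodic {f : ℝ → ℂ} (hper : Function.Periodic f 1)
    (hcont : Continuous f) {c : ℤ → ℂ} (a : ℝ)
    (hc : ∀ d : ℤ, ∫ x in a..a + 1, exp (-(2 * π * I * d * x)) * f x = c d)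
    (hs : Summable c) (y : ℝ) : HasSum (fun d : ℤ => c d * exp (2 * π * I * d * y)) (f y) := by
  let F : C(UnitAddCircle, ℂ) := ⟨hper.lift, continuous_coinduced_dom.mpr hcont⟩
  have hF (x : ℝ) : F x = f x := rfl
  have hcoeff : fourierCoeff F = c := funext fun d => by
    simp only [fourierCoeff_eq_intervalIntegral _ d a, fourier_coe_apply, hF, smul_eq_mul,
      div_one, one_smul, ← hc d]
    push_cast
    ring_nf
  have h := has_pointwise_sum_fourier_series_of_summable (hcoeff ▸ hs) (y : UnitAddCircle)
  rw [hcoeff] at h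
  simpa only [hF, fourier_coe_apply, smul_eq_mul, Complex.ofReal_one, div_one] using h

theorem hasSum_of_hasSum_ite_isCoprime {M : Type*} [AddCommMonoid M] [TopologicalSpace M]
    {c : ℤ × ℤ → M} {σ : M} {m n : ℤ} (hmn : IsCoprime m n) (hn : n ≠ 0)
    (h : HasSum (fun k => if k.1 * m + k.2 * n = 0 then c k else 0) σ) :
    HasSum (fun s : ℤ => c (s * n, -(s * m))) σ := by
  have hinj : Function.Injective fun s : ℤ => (s * n, -(s * m)) :=
    fun s t hst => mul_right_cancel₀ hn (Prod.ext_iff.mp hst).1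
  have hsupp : ∀ k ∉ Set.range fun s : ℤ => (s * n, -(s * m)),
      (if k.1 * m + k.2 * n = 0 then c k else 0) = 0 := by
    intro k hk
    refine if_neg fun h => hk ?_
    obtain ⟨s, hs⟩ := hmn.symm.dvd_of_dvd_mul_right (y := k.1) ⟨-k.2, by linear_combination h⟩
    exact ⟨s, Prod.ext (by rw [hs, mul_comm])
      (mul_left_cancel₀ hn (by linear_combination -h + m * hs))⟩
  convert (hinj.hasSum_iff hsupp).mpr h using 2 with s
  exact (if_pos (by ring)).symm

-- After multiplying out the two Fourier series, only the frequencies `d m + d' n = 0` survive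
-- the integration, and by coprimality these are `(d, d') = (s n, -s m)`.
theorem hasSum_intervalIntegral_mul_comp {a b : ℤ → ℂ} (ha : Summable (‖a ·‖))
    (hb : Summable (‖b ·‖)) {f g : ℝ → ℂ}
    (hf : ∀ y : ℝ, HasSum (fun d : ℤ => a d * exp (2 * π * I * d * y)) (f y))
    (hg : ∀ y : ℝ, HasSum (fun d : ℤ => b d * exp (2 * π * I * d * y)) (g y))
    {m n : ℤ} (hmn : IsCoprime m n) (hn : n ≠ 0) :
    HasSum (fun s : ℤ => a (s * n) * b (-(s * m)))
      (∫ x in (0 : ℝ)..1, f (m * x) * g (n * x)) := by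
  let F : ℤ × ℤ → C(ℝ, ℂ) := fun k =>
    ⟨fun x => a k.1 * b k.2 * exp (2 * π * I * (k.1 * m + k.2 * n : ℤ) * x), by fun_prop⟩
  have hF_norm (k : ℤ × ℤ) (x : ℝ) : ‖F k x‖ = ‖a k.1‖ * ‖b k.2‖ := by
    simp only [F, ContinuousMap.coe_mk, norm_mul, norm_exp_two_pi_I_int_mul, mul_one]
  have hF_tsum (x : ℝ) : ∑' k, F k x = f (m * x) * g (n * x) := by
    have hprod : Summable fun k : ℤ × ℤ => (a k.1 * exp (2 * π * I * k.1 * (m * x : ℝ))) *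
        (b k.2 * exp (2 * π * I * k.2 * (n * x : ℝ))) :=
      summable_mul_of_summable_norm (f := fun d : ℤ => a d * exp (2 * π * I * d * (m * x : ℝ)))
        (g := fun d : ℤ => b d * exp (2 * π * I * d * (n * x : ℝ)))
        (by simpa only [norm_mul, norm_exp_two_pi_I_int_mul, mul_one] using ha)
        (by simpa only [norm_mul, norm_exp_two_pi_I_int_mul, mul_one] using hb)
    refine (tsum_congr fun k => ?_).trans ((hf (m * x)).mul (hg (n * x)) hprod).tsum_eq
    simp only [F, ContinuousMap.coe_mk]
    rw [mul_mul_mul_comm, ← Complex.exp_add]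
    push_cast
    ring_nf
  have hF_integral (k : ℤ × ℤ) :
      ∫ x in (0 : ℝ)..1, F k x = if k.1 * m + k.2 * n = 0 then a k.1 * b k.2 else 0 := by
    simp only [F, ContinuousMap.coe_mk, intervalIntegral.integral_const_mul,
      integral_exp_two_pi_I_int_mul, mul_ite, mul_one, mul_zero]
  have hsum := intervalIntegral.hasSum_intervalIntegral_of_summable_norm (a := 0) (b := 1) (f := F)
    ((ha.mul_of_nonneg hb (fun _ => norm_nonneg _) fun _ => norm_nonneg _).of_nonneg_of_le
      (fun _ => norm_nonneg _) fun k =>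
        (ContinuousMap.norm_le _ (by positivity)).mpr fun x => (hF_norm k x).le)
  simp only [hF_integral, hF_tsum] at hsum
  exact hasSum_of_hasSum_ite_isCoprime (c := fun k => a k.1 * b k.2) hmn hn hsum

theorem hasSum_intervalIntegral_mul_comp_ofReal {a b : ℤ → ℝ} (ha : Summable (|a ·|))
    (hb : Summable (|b ·|)) {f g : ℝ → ℝ}
    (hf : ∀ y : ℝ, HasSum (fun d : ℤ => (a d : ℂ) * exp (2 * π * I * d * y)) (f y))
    (hg : ∀ y : ℝ, HasSum (fun d : ℤ => (b d : ℂ) * exp (2 * π * I * d * y)) (g y))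
    {m n : ℤ} (hmn : IsCoprime m n) (hn : n ≠ 0) :
    HasSum (fun s : ℤ => a (s * n) * b (-(s * m)))
      (∫ x in (0 : ℝ)..1, f (m * x) * g (n * x)) := by
  rw [← Complex.hasSum_ofReal, ← intervalIntegral.integral_ofReal]
  push_cast
  exact hasSum_intervalIntegral_mul_comp
    (by simpa only [Complex.norm_real, Real.norm_eq_abs] using ha)
    (by simpa only [Complex.norm_real, Real.norm_eq_abs] using hb) hf hg hmn hn

theorem cos_pi_mul_pos {x : ℝ} (hx : x ∈ Set.Ioo (-(1 / 2) : ℝ) (1 / 2)) :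
    0 < Real.cos (π * x) :=
  Real.cos_pos_of_mem_Ioo ⟨by nlinarith [Real.pi_pos, hx.1], by nlinarith [Real.pi_pos, hx.2]⟩

noncomputable section

namespace HardyLittlewood

def cosPow (p y : ℝ) : ℝ := |2 * Real.cos (π * y)| ^ p

-- `γ_n`: as `cosPow p = φ` is even, its `d`-th Fourier coefficient is `cosPowCoeff p |d|`.
def cosPowCoeff (p : ℝ) (n : ℕ) : ℝ :=
  ∫ x in -(1 / 2 : ℝ)..1 / 2, cosPow p x * Real.cos (2 * π * n * x)

variable {p : ℝ}

theorem cosPow_periodic (p : ℝ) : Function.Periodic (cosPow p) 1 := fun y => by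
  simp only [cosPow, mul_add, mul_one, Real.cos_add_pi, mul_neg, abs_neg]

theorem cosPow_neg (p y : ℝ) : cosPow p (-y) = cosPow p y := by
  simp only [cosPow, mul_neg, Real.cos_neg]

theorem continuous_cosPow (hp : 0 ≤ p) : Continuous (cosPow p) :=
  (by fun_prop : Continuous fun y => |2 * Real.cos (π * y)|).rpow_const fun _ => Or.inr hp

theorem cosPow_eq_rpow {x : ℝ} (hx : x ∈ Set.Ioo (-(1 / 2) : ℝ) (1 / 2)) :
    cosPow p x = (2 * Real.cos (π * x)) ^ p := by
  rw [cosPow, abs_of_pos (by linarith [cos_pi_mul_pos hx])]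

theorem rpow_norm_one_add_exp (p y : ℝ) : ‖1 + exp (2 * π * I * y)‖ ^ p = cosPow p y := by
  rw [norm_one_add_exp, cosPow]

theorem rpow_norm_one_sub_exp (p y : ℝ) :
    ‖1 - exp (2 * π * I * y)‖ ^ p = cosPow p (y - 1 / 2) := by
  rw [← rpow_norm_one_add_exp,
    show 2 * π * I * ((y - 1 / 2 : ℝ) : ℂ) = 2 * π * I * y + -(π * I) by push_cast; ring,
    Complex.exp_add, Complex.exp_neg_pi_mul_I, mul_neg_one, sub_eq_add_neg]

theorem hasDerivAt_rpow_mul_sin {n : ℕ} {x : ℝ} (hx : x ∈ Set.Ioo (-(1 / 2) : ℝ) (1 / 2)) :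
    HasDerivAt (fun x => (2 * Real.cos (π * x)) ^ (p + 1) * Real.sin ((2 * n + 1) * π * x))
      (π * ((2 * n - p) * (cosPow p x * Real.cos (2 * π * n * x)) +
        (2 * n + p + 2) * (cosPow p x * Real.cos (2 * π * (n + 1 : ℕ) * x)))) x := by
  have hcos : 2 * Real.cos (π * x) ≠ 0 := by linarith [cos_pi_mul_pos hx]
  have h := ((((Real.hasDerivAt_cos (π * x)).comp x ((hasDerivAt_id x).const_mul π)).const_mul
    2).rpow_const (p := p + 1) (Or.inl hcos)).mul
    ((Real.hasDerivAt_sin _).comp x ((hasDerivAt_id x).const_mul ((2 * n + 1) * π)))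
  refine h.congr_deriv ?_
  have hsub : Real.cos (2 * π * n * x) = Real.cos ((2 * n + 1) * π * x) * Real.cos (π * x) +
      Real.sin ((2 * n + 1) * π * x) * Real.sin (π * x) := by
    rw [← Real.cos_sub]; ring_nf
  have hadd : Real.cos (2 * π * (n + 1 : ℕ) * x) = Real.cos ((2 * n + 1) * π * x) *
      Real.cos (π * x) - Real.sin ((2 * n + 1) * π * x) * Real.sin (π * x) := by
    rw [← Real.cos_add]; push_cast; ring_nf
  simp only [Function.comp_apply, id, mul_one, add_sub_cancel_right, Real.rpow_add_one hcos,
    cosPow_eq_rpow hx, hsub, hadd]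
  ring

theorem cosPowCoeff_succ (hp : 0 < p) (n : ℕ) :
    (p + 2 * n + 2) * cosPowCoeff p (n + 1) = (p - 2 * n) * cosPowCoeff p n := by
  set F : ℝ → ℝ := fun x => (2 * Real.cos (π * x)) ^ (p + 1) * Real.sin ((2 * n + 1) * π * x)
  have hcontF : Continuous F :=
    ((by fun_prop : Continuous fun x => 2 * Real.cos (π * x)).rpow_const
      fun _ => Or.inr (by linarith)).mul (by fun_prop)
  have hF_half : F (1 / 2) = 0 ∧ F (-(1 / 2)) = 0 := by
    simp only [F, mul_neg, Real.cos_neg, show π * (1 / 2) = π / 2 by ring, Real.cos_pi_div_two,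
      mul_zero, Real.zero_rpow (by linarith : p + 1 ≠ 0), zero_mul, and_self]
  have hint (k : ℕ) : IntervalIntegrable (fun x => cosPow p x * Real.cos (2 * π * k * x))
      volume (-(1 / 2)) (1 / 2) :=
    ((continuous_cosPow hp.le).mul (by fun_prop)).intervalIntegrable _ _
  have hFTC := intervalIntegral.integral_eq_sub_of_hasDerivAt_of_le (by norm_num)
    hcontF.continuousOn (fun x hx => hasDerivAt_rpow_mul_sin hx)
    ((((hint n).const_mul _).add ((hint (n + 1)).const_mul _)).const_mul π)
  rw [hF_half.1, hF_half.2, sub_zero, intervalIntegral.integral_const_mul,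
    intervalIntegral.integral_add ((hint n).const_mul _) ((hint (n + 1)).const_mul _),
    intervalIntegral.integral_const_mul, intervalIntegral.integral_const_mul] at hFTC
  have := (mul_eq_zero.mp hFTC).resolve_left Real.pi_ne_zero
  rw [cosPowCoeff, cosPowCoeff]
  linarith

theorem cosPowCoeff_zero_pos (hp : 0 ≤ p) : 0 < cosPowCoeff p 0 := by
  simp only [cosPowCoeff, Nat.cast_zero, mul_zero, zero_mul, Real.cos_zero, mul_one]
  refine intervalIntegral.intervalIntegral_pos_of_pos_on
    ((continuous_cosPow hp).intervalIntegrable _ _) (fun x hx => ?_) (by norm_num)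
  rw [cosPow_eq_rpow hx]
  exact Real.rpow_pos_of_pos (by linarith [cos_pi_mul_pos hx]) p

theorem cosPowCoeff_ne_zero (hp : 0 < p) (hpe : ∀ m : ℕ, p ≠ 2 * m) (n : ℕ) :
    cosPowCoeff p n ≠ 0 := by
  induction n with
  | zero => exact (cosPowCoeff_zero_pos hp.le).ne'
  | succ n ih =>
    intro h0
    have h := cosPowCoeff_succ hp n
    rw [h0, mul_zero] at h
    exact mul_ne_zero (sub_ne_zero.mpr (hpe n)) ih h.symm

theorem neg_one_pow_mul_cosPowCoeff_mul_pos (hp : 0 < p) (hpe : ∀ m : ℕ, p ≠ 2 * m) {a : ℕ}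
    (ha : p / 2 < a) (k : ℕ) : 0 < (-1) ^ k * (cosPowCoeff p a * cosPowCoeff p (a + k)) := by
  induction k with
  | zero => simpa using mul_self_pos.mpr (cosPowCoeff_ne_zero hp hpe a)
  | succ k ih =>
    have hrec := cosPowCoeff_succ hp (a + k)
    have hk : 0 < 2 * (a + k : ℕ) - p := by
      push_cast; linarith [(Nat.cast_nonneg k : (0 : ℝ) ≤ k)]
    have hstep : (p + 2 * (a + k : ℕ) + 2) *
        ((-1) ^ (k + 1) * (cosPowCoeff p a * cosPowCoeff p (a + (k + 1)))) =
        (2 * (a + k : ℕ) - p) * ((-1) ^ k * (cosPowCoeff p a * cosPowCoeff p (a + k))) := by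
      rw [pow_succ, ← add_assoc]
      linear_combination (-(-1) ^ k * cosPowCoeff p a) * hrec
    exact pos_of_mul_pos_right (hstep ▸ mul_pos hk ih) (by positivity)

-- For `n ≥ p/2` the ratio `|γ_{n+1} / γ_n| = (2n - p) / (p + 2n + 2)` is at most `(n / (n+1))²`
-- as soon as `p ≥ 1`.
theorem summable_cosPowCoeff (hp : 1 ≤ p) : Summable (cosPowCoeff p) := by
  refine summable_of_abs_mul_sq_le (N := ⌈p / 2⌉₊) fun n hn => ?_
  have hpn : p ≤ 2 * n := by linarith [Nat.ceil_le.mp hn]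
  have hden : 0 < p + 2 * n + 2 := by positivity
  have habs : (p + 2 * n + 2) * |cosPowCoeff p (n + 1)| = (2 * n - p) * |cosPowCoeff p n| := by
    have h := congrArg abs (cosPowCoeff_succ (by linarith) n)
    rwa [abs_mul, abs_mul, abs_of_pos hden, abs_of_nonpos (by linarith : p - 2 * (n : ℝ) ≤ 0),
      neg_sub] at h
  have key : (2 * n - p) * ((n : ℝ) + 1) ^ 2 ≤ (n : ℝ) ^ 2 * (p + 2 * n + 2) := by
    nlinarith [(Nat.cast_nonneg n : (0 : ℝ) ≤ n)]
  refine le_of_mul_le_mul_left ?_ hden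
  calc (p + 2 * n + 2) * (|cosPowCoeff p (n + 1)| * ((n : ℝ) + 1) ^ 2)
      = (2 * n - p) * ((n : ℝ) + 1) ^ 2 * |cosPowCoeff p n| := by rw [← mul_assoc, habs]; ring
    _ ≤ (n : ℝ) ^ 2 * (p + 2 * n + 2) * |cosPowCoeff p n| :=
      mul_le_mul_of_nonneg_right key (abs_nonneg _)
    _ = (p + 2 * n + 2) * (|cosPowCoeff p n| * (n : ℝ) ^ 2) := by ring

theorem summable_abs_cosPowCoeff_natAbs (hp : 1 ≤ p) :
    Summable fun d : ℤ => |cosPowCoeff p d.natAbs| := by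
  have h := (summable_cosPowCoeff hp).abs
  exact .of_nat_of_neg (by simpa using h) (by simpa using h)

theorem integral_exp_mul_cosPow (hp : 0 ≤ p) (d : ℤ) :
    ∫ x in -(1 / 2 : ℝ)..-(1 / 2) + 1, exp (-(2 * π * I * d * x)) * cosPow p x =
      cosPowCoeff p d.natAbs := by
  rw [show -(1 / 2 : ℝ) + 1 = 1 / 2 by norm_num]
  set J : ℤ → ℂ := fun d => ∫ x in -(1 / 2 : ℝ)..1 / 2, exp (-(2 * π * I * d * x)) * cosPow p x
  have hJ_neg : J (-d) = J d := by
    simp only [J]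
    rw [← neg_neg (1 / 2 : ℝ), ← intervalIntegral.integral_comp_neg, neg_neg]
    refine intervalIntegral.integral_congr fun x _ => ?_
    simp only [cosPow_neg]
    push_cast
    ring_nf
  have hint (d : ℤ) : IntervalIntegrable (fun x : ℝ => exp (-(2 * π * I * d * x)) * cosPow p x)
      volume (-(1 / 2)) (1 / 2) :=
    ((by fun_prop : Continuous fun x : ℝ => exp (-(2 * π * I * d * x))).mul
      (Complex.continuous_ofReal.comp (continuous_cosPow hp))).intervalIntegrable _ _
  have hcos (x : ℝ) : Real.cos (2 * π * (d.natAbs : ℕ) * x) = Real.cos (2 * π * d * x) := by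
    rw [Nat.cast_natAbs, Int.cast_abs]
    rcases abs_choice (d : ℝ) with h | h <;> rw [h]
    rw [← Real.cos_neg]; ring_nf
  have hsum : J d + J (-d) = 2 * cosPowCoeff p d.natAbs := by
    rw [cosPowCoeff, ← intervalIntegral.integral_ofReal, ← intervalIntegral.integral_const_mul,
      ← intervalIntegral.integral_add (hint d) (hint (-d))]
    refine intervalIntegral.integral_congr fun x _ => ?_
    rw [hcos]
    push_cast
    rw [mul_left_comm, Complex.two_cos]
    ring_nf
  linear_combination (hsum - hJ_neg) / 2

theorem hasSum_cosPow (hp : 1 ≤ p) (y : ℝ) :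
    HasSum (fun d : ℤ => (cosPowCoeff p d.natAbs : ℂ) * exp (2 * π * I * d * y))
      (cosPow p y) :=
  hasSum_fourier_of_periodic (f := fun y => (cosPow p y : ℂ))
    (fun y => congrArg Complex.ofReal (cosPow_periodic p y))
    (Complex.continuous_ofReal.comp (continuous_cosPow (by linarith))) (-(1 / 2))
    (integral_exp_mul_cosPow (by linarith))
    (.of_norm (by simpa [Complex.norm_real] using summable_abs_cosPowCoeff_natAbs hp)) y

theorem exp_neg_pi_I_int_mul (d : ℤ) : exp (-(π * I * d)) = (-1) ^ d.natAbs := by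
  rw [show -(π * I * d) = ((-d : ℤ) : ℂ) * (π * I) by push_cast; ring, Complex.exp_int_mul,
    Complex.exp_pi_mul_I]
  rcases Int.even_or_odd d with h | h
  · rw [h.neg.neg_one_zpow, (Int.natAbs_even.mpr h).neg_one_pow]
  · rw [h.neg.neg_one_zpow, (Int.natAbs_odd.mpr h).neg_one_pow]

theorem hasSum_cosPow_sub_half (hp : 1 ≤ p) (y : ℝ) :
    HasSum (fun d : ℤ => (((-1) ^ d.natAbs * cosPowCoeff p d.natAbs : ℝ) : ℂ) *
      exp (2 * π * I * d * y)) (cosPow p (y - 1 / 2)) := by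
  convert hasSum_cosPow hp (y - 1 / 2) using 2 with d
  rw [show 2 * π * I * d * ((y - 1 / 2 : ℝ) : ℂ) = 2 * π * I * d * y + -(π * I * d) by
    push_cast; ring, Complex.exp_add, exp_neg_pi_I_int_mul]
  push_cast
  ring

theorem hasSum_integral_cosPow_mul_cosPow (hp : 1 ≤ p) {j : ℤ} (hj : j + 1 ≠ 0) :
    HasSum (fun s : ℤ => cosPowCoeff p (s * (j + 1)).natAbs * cosPowCoeff p (s * j).natAbs)
      (∫ x in (0 : ℝ)..1, cosPow p (j * x) * cosPow p ((j + 1) * x)) := by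
  have h := hasSum_intervalIntegral_mul_comp_ofReal (summable_abs_cosPowCoeff_natAbs hp)
    (summable_abs_cosPowCoeff_natAbs hp) (hasSum_cosPow hp) (hasSum_cosPow hp)
    (⟨-1, 1, by ring⟩ : IsCoprime j (j + 1)) hj
  simpa only [Int.natAbs_neg, Int.cast_add, Int.cast_one] using h

theorem hasSum_integral_cosPow_mul_cosPow_sub_half (hp : 1 ≤ p) {j : ℤ} (hj : j + 1 ≠ 0) :
    HasSum (fun s : ℤ => (-1) ^ (s * j).natAbs *
        (cosPowCoeff p (s * (j + 1)).natAbs * cosPowCoeff p (s * j).natAbs))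
      (∫ x in (0 : ℝ)..1, cosPow p (j * x) * cosPow p ((j + 1) * x - 1 / 2)) := by
  have hs : Summable fun d : ℤ => |(-1) ^ d.natAbs * cosPowCoeff p d.natAbs| := by
    simpa only [abs_mul, abs_pow, abs_neg, abs_one, one_pow, one_mul]
      using summable_abs_cosPowCoeff_natAbs hp
  have h := hasSum_intervalIntegral_mul_comp_ofReal (summable_abs_cosPowCoeff_natAbs hp) hs
    (hasSum_cosPow hp) (hasSum_cosPow_sub_half hp) (⟨-1, 1, by ring⟩ : IsCoprime j (j + 1)) hj
  simp only [Int.natAbs_neg, Int.cast_add, Int.cast_one] at h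
  convert h using 2 with s
  ring

theorem cosPowCoeff_natAbs_mul_neg (hp : 0 < p) (hpe : ∀ m : ℕ, p ≠ 2 * m) {j s : ℤ}
    (hjp : p / 2 < j) (hs : Odd s) :
    cosPowCoeff p (s * (j + 1)).natAbs * cosPowCoeff p (s * j).natAbs < 0 := by
  have hj : 0 ≤ j := by exact_mod_cast (by linarith : (0 : ℝ) ≤ j)
  have hs0 : 0 < s.natAbs := Int.natAbs_pos.mpr (by rintro rfl; simp at hs)
  have hsplit : (s * (j + 1)).natAbs = (s * j).natAbs + s.natAbs := by
    rw [Int.natAbs_mul, Int.natAbs_mul, show (j + 1).natAbs = j.natAbs + 1 by omega]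
    ring
  have ha : p / 2 < (s * j).natAbs := by
    have hle : j.natAbs ≤ (s * j).natAbs := by
      rw [Int.natAbs_mul]; exact Nat.le_mul_of_pos_left _ hs0
    calc p / 2 < j := hjp
      _ = (j.natAbs : ℝ) := by
        rw [Nat.cast_natAbs, Int.cast_abs, abs_of_nonneg (by exact_mod_cast hj)]
      _ ≤ (s * j).natAbs := by exact_mod_cast hle
  have h := neg_one_pow_mul_cosPowCoeff_mul_pos hp hpe ha s.natAbs
  rw [(Int.natAbs_odd.mpr hs).neg_one_pow, neg_one_mul, neg_pos] at h
  rwa [hsplit, mul_comm]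

theorem rpow_norm_one_add_exp_mul_one_add_exp (p : ℝ) (j : ℤ) (x : ℝ) :
    ‖(1 + exp (2 * π * I * j * x)) * (1 + exp (2 * π * I * (j + 1) * x))‖ ^ p =
      cosPow p (j * x) * cosPow p ((j + 1) * x) := by
  rw [norm_mul, Real.mul_rpow (norm_nonneg _) (norm_nonneg _), ← rpow_norm_one_add_exp,
    ← rpow_norm_one_add_exp]
  push_cast
  ring_nf

theorem rpow_norm_one_add_exp_mul_one_sub_exp (p : ℝ) (j : ℤ) (x : ℝ) :
    ‖(1 + exp (2 * π * I * j * x)) * (1 - exp (2 * π * I * (j + 1) * x))‖ ^ p =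
      cosPow p (j * x) * cosPow p ((j + 1) * x - 1 / 2) := by
  rw [norm_mul, Real.mul_rpow (norm_nonneg _) (norm_nonneg _), ← rpow_norm_one_add_exp,
    ← rpow_norm_one_sub_exp]
  push_cast
  ring_nf

end HardyLittlewood

end

open HardyLittlewood

/-- **Failure of the Hardy–Littlewood majorant property** (Mockenhaupt–Schlag
examples). For `p > 2` not an even integer and `j` an odd integer with `j > p/2`,
the polynomials `G₀ = (1+e_j)(1+e_{j+1})` and `g₀ = (1+e_j)(1−e_{j+1})` satisfy
`‖G₀‖_{L^p(𝕋)} < ‖g₀‖_{L^p(𝕋)}`, although the Fourier coefficients of `g₀` are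
majorized in absolute value by those of `G₀`. -/
theorem majorant_property_fails
    (p : ℝ) (hp : 2 < p) (hpe : ∀ m : ℕ, p ≠ 2 * m)
    (j : ℤ) (hj : Odd j) (hjp : p / 2 < (j : ℝ)) :
    (∫ x in (0 : ℝ)..1,
        ‖(1 + Complex.exp (2 * Real.pi * Complex.I * (j : ℂ) * (x : ℂ))) *
            (1 + Complex.exp (2 * Real.pi * Complex.I * ((j : ℂ) + 1) * (x : ℂ)))‖ ^ p) ^ (1 / p) <
      (∫ x in (0 : ℝ)..1,
        ‖(1 + Complex.exp (2 * Real.pi * Complex.I * (j : ℂ) * (x : ℂ))) *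
            (1 - Complex.exp (2 * Real.pi * Complex.I * ((j : ℂ) + 1) * (x : ℂ)))‖ ^ p) ^ (1 / p) := by
  have hp0 : 0 < p := by linarith
  have hj1 : j + 1 ≠ 0 := by
    have : 0 < j := by exact_mod_cast (by linarith : (0 : ℝ) < j)
    omega
  have hterm (s : ℤ) : cosPowCoeff p (s * (j + 1)).natAbs * cosPowCoeff p (s * j).natAbs ≤
      (-1) ^ (s * j).natAbs *
        (cosPowCoeff p (s * (j + 1)).natAbs * cosPowCoeff p (s * j).natAbs) := by
    rcases Int.even_or_odd s with hs | hs
    · rw [(Int.natAbs_even.mpr (hs.mul_right j)).neg_one_pow, one_mul]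
    · rw [(Int.natAbs_odd.mpr (hs.mul hj)).neg_one_pow]
      linarith [cosPowCoeff_natAbs_mul_neg hp0 hpe hjp hs]
  have hterm_one := cosPowCoeff_natAbs_mul_neg hp0 hpe hjp odd_one
  have hI := hasSum_lt hterm (i := 1)
    (by rw [(Int.natAbs_odd.mpr (odd_one.mul hj)).neg_one_pow]; linarith)
    (hasSum_integral_cosPow_mul_cosPow (by linarith) hj1)
    (hasSum_integral_cosPow_mul_cosPow_sub_half (by linarith) hj1)
  simp only [rpow_norm_one_add_exp_mul_one_add_exp, rpow_norm_one_add_exp_mul_one_sub_exp]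
  refine Real.rpow_lt_rpow (intervalIntegral.integral_nonneg zero_le_one fun x _ => ?_) hI
    (by positivity)
  exact mul_nonneg (Real.rpow_nonneg (abs_nonneg _) _) (Real.rpow_nonneg (abs_nonneg _) _)
end

section
/- Let p > 2 with p not an even integer, let j be an odd integer with j > p/2, set G_0 = (1 + e_j)(1 + e_{j+1}) and g_0 = (1 + e_j)(1 − e_{j+1}), and let q > 0 be such that ‖G_0‖_{L^p(𝕋)} < ‖g_0‖_{L^q(𝕋)}. Then for every ε > 0 there exist K ∈ ℕ and positive integers N_1, …, N_K such that the Riesz-product-type polynomials G(t) = G_0(t) · ∏_{i=1}^{K} G_0(N_i t) and g(t) = g_0(t) · ∏_{i=1}^{K} g_0(N_i t) satisfy ‖G‖_{L^p(𝕋)} ≤ ε · ‖g‖_{L^q(𝕋)}. -/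
/-!
For continuous `f` and continuous `1`-periodic `h`, `∫₀¹ f(x) h(Nx) dx → (∫₀¹ f) (∫₀¹ h)` as
`N → ∞`: the substitution `y = Nx` and periodicity turn the left side into `∫₀¹ D_N(u) h(u) du`
with `D_N(u) = N⁻¹ ∑_{k<N} f((u + k)/N)`, and these Riemann sums tend to `∫₀¹ f` uniformly.
Applied to `‖·‖^p`, appending a factor `G₀(N ·)` with `N` large multiplies the `L^p` norm by
almost exactly `‖G₀‖_p`. Fixing `‖G₀‖_p < u < v < ‖g₀‖_q` and choosing the frequencies one at a
time therefore gives `‖G‖_p ≤ u^(K+1)` and `v^(K+1) ≤ ‖g‖_q`, while `(u/v)^(K+1) → 0`.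
-/

open MeasureTheory Finset Function Filter Topology Set intervalIntegral

theorem TendstoUniformlyOn.mul_right_of_abs_le {ι α : Type*} {F : ι → α → ℝ} {f h : α → ℝ}
    {l : Filter ι} {s : Set α} {M : ℝ} (hF : TendstoUniformlyOn F f l s)
    (hh : ∀ x ∈ s, |h x| ≤ M) :
    TendstoUniformlyOn (fun n x => F n x * h x) (fun x => f x * h x) l s := by
  rw [Metric.tendstoUniformlyOn_iff] at *
  intro ε hε
  filter_upwards [hF (ε / (|M| + 1)) (by positivity)] with n hn x hx
  rw [Real.dist_eq, ← sub_mul, abs_mul]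
  calc |f x - F n x| * |h x| ≤ |f x - F n x| * (|M| + 1) := by
        gcongr; linarith [hh x hx, le_abs_self M]
    _ < ε / (|M| + 1) * (|M| + 1) := by gcongr; exact hn x hx
    _ = ε := div_mul_cancel₀ _ (by positivity)

noncomputable def shiftedRiemannSum (f : ℝ → ℝ) (N : ℕ) (u : ℝ) : ℝ :=
  (N : ℝ)⁻¹ * ∑ k ∈ range N, f ((u + k) / N)

section RiemannSum

variable {f h : ℝ → ℝ}

theorem intervalIntegral_mul_comp_nat_mul (hf : Continuous f) (hh : Continuous h)
    (hper : Periodic h 1) {N : ℕ} (hN : N ≠ 0) :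
    ∫ x in (0 : ℝ)..1, f x * h (N * x) = ∫ u in (0 : ℝ)..1, shiftedRiemannSum f N u * h u := by
  have hN' : (N : ℝ) ≠ 0 := Nat.cast_ne_zero.mpr hN
  have hcont : Continuous fun y => f (y / N) * h y := by fun_prop
  calc ∫ x in (0 : ℝ)..1, f x * h (N * x)
      = (N : ℝ)⁻¹ * ∫ y in (0 : ℝ)..N, f (y / N) * h y := by
        simpa [mul_div_cancel_left₀ _ hN'] using
          integral_comp_mul_left (fun y => f (y / N) * h y) hN' (a := 0) (b := 1)
    _ = (N : ℝ)⁻¹ * ∑ k ∈ range N, ∫ y in (k : ℝ)..k + 1, f (y / N) * h y := by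
        have := sum_integral_adjacent_intervals (a := fun k : ℕ => (k : ℝ)) (μ := volume)
          (n := N) fun k _ => hcont.intervalIntegrable _ _
        push_cast at this
        rw [this]
    _ = (N : ℝ)⁻¹ * ∑ k ∈ range N, ∫ u in (0 : ℝ)..1, f ((u + k) / N) * h u := by
        congr 1
        refine sum_congr rfl fun k _ => ?_
        have := integral_comp_add_right (fun y => f (y / N) * h y) (k : ℝ) (a := 0) (b := 1)
        rw [zero_add, add_comm 1] at this
        rw [← this]
        refine integral_congr fun u _ => ?_
        simpa using congrArg (f ((u + k) / N) * ·) (hper.nat_mul k u)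
    _ = ∫ u in (0 : ℝ)..1, shiftedRiemannSum f N u * h u := by
        simp_rw [shiftedRiemannSum, mul_assoc, sum_mul]
        rw [intervalIntegral.integral_const_mul, intervalIntegral.integral_finsetSum fun k _ => by
          exact (Continuous.intervalIntegrable (by fun_prop) _ _)]

theorem eventually_dist_shiftedRiemannSum_le (hf : ContinuousOn f (Icc 0 1))
    {ε : ℝ} (hε : 0 < ε) :
    ∀ᶠ N : ℕ in atTop, ∀ u ∈ Icc (0 : ℝ) 1, ∀ v ∈ Icc (0 : ℝ) 1,
      dist (shiftedRiemannSum f N u) (shiftedRiemannSum f N v) ≤ ε := by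
  obtain ⟨δ, hδ, hfδ⟩ := Metric.uniformContinuousOn_iff.1
    (isCompact_Icc.uniformContinuousOn_of_continuous hf) ε hε
  filter_upwards [(tendsto_inv_atTop_zero.comp tendsto_natCast_atTop_atTop).eventually
    (gt_mem_nhds hδ), eventually_ne_atTop 0] with N hNδ hN u hu v hv
  have hN' : (0 : ℝ) < N := by positivity
  have hmem : ∀ w ∈ Icc (0 : ℝ) 1, ∀ k ∈ range N, (w + k) / N ∈ Icc (0 : ℝ) 1 := by
    intro w hw k hk
    have : (k : ℝ) + 1 ≤ N := by exact_mod_cast mem_range.1 hk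
    constructor
    · exact div_nonneg (by linarith [hw.1]) hN'.le
    · rw [div_le_one hN']; linarith [hw.2]
  have hclose : ∀ k ∈ range N, dist (f ((u + k) / N)) (f ((v + k) / N)) ≤ ε := by
    intro k hk
    refine (hfδ _ (hmem u hu k hk) _ (hmem v hv k hk) ?_).le
    rw [Real.dist_eq, ← sub_div, add_sub_add_right_eq_sub, abs_div, Nat.abs_cast, div_lt_iff₀ hN']
    calc |u - v| ≤ 1 := abs_sub_le_of_nonneg_of_le hu.1 hu.2 hv.1 hv.2
      _ = (N : ℝ)⁻¹ * N := (inv_mul_cancel₀ hN'.ne').symm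
      _ < δ * N := by gcongr; exact hNδ
  calc dist (shiftedRiemannSum f N u) (shiftedRiemannSum f N v)
      = (N : ℝ)⁻¹ * ‖∑ k ∈ range N, (f ((u + k) / N) - f ((v + k) / N))‖ := by
        rw [dist_eq_norm, shiftedRiemannSum, shiftedRiemannSum, ← mul_sub, ← sum_sub_distrib,
          norm_mul, norm_inv, RCLike.norm_natCast]
    _ ≤ (N : ℝ)⁻¹ * ∑ _k ∈ range N, ε := by
        gcongr
        exact (norm_sum_le _ _).trans (sum_le_sum hclose)
    _ = ε := by rw [sum_const, card_range, nsmul_eq_mul, inv_mul_cancel_left₀ hN'.ne']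

theorem tendstoUniformlyOn_shiftedRiemannSum (hf : Continuous f) :
    TendstoUniformlyOn (shiftedRiemannSum f) (fun _ => ∫ x in (0 : ℝ)..1, f x) atTop
      (Icc 0 1) := by
  rw [Metric.tendstoUniformlyOn_iff]
  intro ε hε
  filter_upwards [eventually_dist_shiftedRiemannSum_le hf.continuousOn (half_pos hε),
    eventually_ne_atTop 0] with N hosc hN u hu
  -- the case `h = 1` of the substitution: `∫₀¹ f` is also the mean of the Riemann sums
  have hmean : ∫ x in (0 : ℝ)..1, f x = ∫ v in (0 : ℝ)..1, shiftedRiemannSum f N v := by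
    simpa using intervalIntegral_mul_comp_nat_mul (h := fun _ => 1) hf continuous_const
      (fun _ => rfl) hN
  have hD : Continuous (shiftedRiemannSum f N) := by unfold shiftedRiemannSum; fun_prop
  calc dist (∫ x in (0 : ℝ)..1, f x) (shiftedRiemannSum f N u)
      = ‖∫ v in (0 : ℝ)..1, (shiftedRiemannSum f N v - shiftedRiemannSum f N u)‖ := by
        rw [hmean, dist_eq_norm, intervalIntegral.integral_sub (hD.intervalIntegrable _ _)
          intervalIntegrable_const, intervalIntegral.integral_const, sub_zero, one_smul]
    _ ≤ ε / 2 * |1 - 0| := norm_integral_le_of_norm_le_const fun v hv =>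
        hosc v (Ioc_subset_Icc_self (by simpa using hv)) u hu
    _ < ε := by norm_num; linarith

theorem tendsto_intervalIntegral_mul_comp_nat_mul (hf : Continuous f) (hh : Continuous h)
    (hper : Periodic h 1) :
    Tendsto (fun N : ℕ => ∫ x in (0 : ℝ)..1, f x * h (N * x)) atTop
      (𝓝 ((∫ x in (0 : ℝ)..1, f x) * ∫ x in (0 : ℝ)..1, h x)) := by
  obtain ⟨M, hM⟩ := (isCompact_uIcc (a := (0 : ℝ)) (b := 1)).exists_bound_of_continuousOn
    hh.continuousOn
  have hunif := (tendstoUniformlyOn_shiftedRiemannSum hf).mono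
    (Set.uIcc_of_le zero_le_one).subset |>.mul_right_of_abs_le hM
  rw [← intervalIntegral.integral_const_mul]
  refine (hunif.tendsto_intervalIntegral_of_continuousOn (.of_forall fun N => ?_)).congr' ?_
  · unfold shiftedRiemannSum; fun_prop
  · filter_upwards [eventually_ne_atTop 0] with N hN
    exact (intervalIntegral_mul_comp_nat_mul hf hh hper hN).symm

end RiemannSum

noncomputable def torusLpNorm (p : ℝ) (f : ℝ → ℂ) : ℝ :=
  (∫ x in (0 : ℝ)..1, ‖f x‖ ^ p) ^ (1 / p)

theorem torusLpNorm_nonneg (p : ℝ) (f : ℝ → ℂ) : 0 ≤ torusLpNorm p f :=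
  Real.rpow_nonneg (integral_nonneg zero_le_one fun _ _ => Real.rpow_nonneg (norm_nonneg _) _) _

section LpNorm

variable {p : ℝ} {f G : ℝ → ℂ}

theorem tendsto_torusLpNorm_mul_comp_nat_mul (hp : 0 ≤ p) (hf : Continuous f)
    (hG : Continuous G) (hper : Periodic G 1) :
    Tendsto (fun N : ℕ => torusLpNorm p fun x => f x * G (N * x)) atTop
      (𝓝 (torusLpNorm p f * torusLpNorm p G)) := by
  have hpow : ∀ φ : ℝ → ℂ, Continuous φ → Continuous fun x => ‖φ x‖ ^ p :=
    fun φ hφ => hφ.norm.rpow_const fun _ => Or.inr hp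
  have hint := tendsto_intervalIntegral_mul_comp_nat_mul (hpow f hf) (hpow G hG)
    fun x => by simp only [hper x]
  have hnonneg : ∀ φ : ℝ → ℂ, 0 ≤ ∫ x in (0 : ℝ)..1, ‖φ x‖ ^ p :=
    fun φ => integral_nonneg zero_le_one fun _ _ => Real.rpow_nonneg (norm_nonneg _) _
  have := hint.rpow_const (p := 1 / p) (Or.inr (by positivity))
  rw [Real.mul_rpow (hnonneg f) (hnonneg G)] at this
  simpa only [torusLpNorm, norm_mul, Real.mul_rpow (norm_nonneg _) (norm_nonneg _)] using this

theorem eventually_torusLpNorm_mul_comp_lt (hp : 0 ≤ p) (hf : Continuous f)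
    (hG : Continuous G) (hper : Periodic G 1) {c u : ℝ} (hc : 0 < c)
    (hfc : torusLpNorm p f ≤ c) (hGu : torusLpNorm p G < u) :
    ∀ᶠ N : ℕ in atTop, torusLpNorm p (fun x => f x * G (N * x)) < c * u :=
  (tendsto_torusLpNorm_mul_comp_nat_mul hp hf hG hper).eventually_lt_const <|
    (mul_le_mul_of_nonneg_right hfc (torusLpNorm_nonneg p G)).trans_lt
      (mul_lt_mul_of_pos_left hGu hc)

theorem eventually_lt_torusLpNorm_mul_comp (hp : 0 ≤ p) (hf : Continuous f)
    (hG : Continuous G) (hper : Periodic G 1) {c v : ℝ} (hc : 0 < c)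
    (hcf : c ≤ torusLpNorm p f) (hvG : v < torusLpNorm p G) :
    ∀ᶠ N : ℕ in atTop, c * v < torusLpNorm p (fun x => f x * G (N * x)) :=
  (tendsto_torusLpNorm_mul_comp_nat_mul hp hf hG hper).eventually_const_lt <|
    (mul_lt_mul_of_pos_left hvG hc).trans_le
      (mul_le_mul_of_nonneg_right hcf (torusLpNorm_nonneg p G))

end LpNorm

def rieszProduct (G : ℝ → ℂ) {K : ℕ} (N : Fin K → ℕ) (x : ℝ) : ℂ :=
  G x * ∏ i, G (N i * x)

theorem rieszProduct_snoc (G : ℝ → ℂ) {K : ℕ} (N : Fin K → ℕ) (M : ℕ) :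
    rieszProduct G (Fin.snoc N M : Fin (K + 1) → ℕ) = fun x => rieszProduct G N x * G (M * x) := by
  ext x
  simp [rieszProduct, Fin.prod_univ_castSucc, mul_assoc]

theorem Continuous.rieszProduct {G : ℝ → ℂ} (hG : Continuous G) {K : ℕ} (N : Fin K → ℕ) :
    Continuous (rieszProduct G N) := by
  unfold _root_.rieszProduct
  fun_prop

theorem exists_rieszProduct_torusLpNorm_bounds {G g : ℝ → ℂ} {p q u v : ℝ} (hp : 0 ≤ p)
    (hq : 0 ≤ q) (hG : Continuous G) (hGper : Periodic G 1) (hg : Continuous g)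
    (hgper : Periodic g 1) (hGu : torusLpNorm p G < u) (hv : 0 < v)
    (hvg : v < torusLpNorm q g) (K : ℕ) :
    ∃ N : Fin K → ℕ, (∀ i, 0 < N i) ∧ torusLpNorm p (rieszProduct G N) ≤ u ^ (K + 1) ∧
      v ^ (K + 1) ≤ torusLpNorm q (rieszProduct g N) := by
  have hu : 0 < u := (torusLpNorm_nonneg p G).trans_lt hGu
  induction K with
  | zero =>
    have h_elim0 : ∀ φ : ℝ → ℂ, rieszProduct φ (Fin.elim0 : Fin 0 → ℕ) = φ :=
      fun φ => funext fun x => by simp [rieszProduct]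
    exact ⟨Fin.elim0, fun i => i.elim0, by simpa [h_elim0] using hGu.le,
      by simpa [h_elim0] using hvg.le⟩
  | succ K ih =>
    obtain ⟨N, hN, hGN, hgN⟩ := ih
    obtain ⟨M, hM, hGM, hgM⟩ := ((eventually_gt_atTop 0).and
      ((eventually_torusLpNorm_mul_comp_lt hp (hG.rieszProduct N) hG hGper (by positivity)
        hGN hGu).and
      (eventually_lt_torusLpNorm_mul_comp hq (hg.rieszProduct N) hg hgper (by positivity)
        hgN hvg))).exists
    refine ⟨Fin.snoc N M, fun i => ?_, ?_, ?_⟩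
    · induction i using Fin.lastCases <;> simp [hM, hN]
    · rw [rieszProduct_snoc, pow_succ _ (K + 1)]
      exact hGM.le
    · rw [rieszProduct_snoc, pow_succ _ (K + 1)]
      exact hgM.le

theorem periodic_cexp_two_pi_I_int_mul (m : ℤ) :
    Periodic (fun x : ℝ => Complex.exp (2 * Real.pi * Complex.I * m * x)) 1 := by
  intro x
  dsimp only
  rw [Complex.ofReal_add, Complex.ofReal_one, mul_add, Complex.exp_add, mul_one,
    show 2 * Real.pi * Complex.I * m = m * (2 * Real.pi * Complex.I) by ring,
    Complex.exp_int_mul_two_pi_mul_I, mul_one]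

theorem exists_pow_succ_le_mul_pow {u v ε : ℝ} (hu : 0 ≤ u) (huv : u < v) (hε : 0 < ε) :
    ∃ K : ℕ, u ^ (K + 1) ≤ ε * v ^ (K + 1) := by
  have hv : 0 < v := hu.trans_lt huv
  obtain ⟨K, hK⟩ := exists_pow_lt_of_lt_one hε ((div_lt_one hv).2 huv)
  refine ⟨K, ?_⟩
  have := (pow_le_pow_of_le_one (div_nonneg hu hv.le) ((div_le_one hv).2 huv.le)
    K.le_succ).trans hK.le
  rwa [div_pow, div_le_iff₀ (by positivity)] at this

theorem riesz_product_amplification_general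
    (p : ℝ) (hp : 2 < p)
    (j : ℤ)
    (G₀ g₀ : ℝ → ℂ)
    (hG₀ : ∀ x : ℝ, G₀ x =
      (1 + Complex.exp (2 * Real.pi * Complex.I * (j : ℂ) * (x : ℂ))) *
        (1 + Complex.exp (2 * Real.pi * Complex.I * ((j : ℂ) + 1) * (x : ℂ))))
    (hg₀ : ∀ x : ℝ, g₀ x =
      (1 + Complex.exp (2 * Real.pi * Complex.I * (j : ℂ) * (x : ℂ))) *
        (1 - Complex.exp (2 * Real.pi * Complex.I * ((j : ℂ) + 1) * (x : ℂ))))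
    (q : ℝ) (hq : 0 < q)
    (hlt : (∫ x in (0 : ℝ)..1, ‖G₀ x‖ ^ p) ^ (1 / p) <
      (∫ x in (0 : ℝ)..1, ‖g₀ x‖ ^ q) ^ (1 / q))
    (ε : ℝ) (hε : 0 < ε) :
    ∃ (K : ℕ) (N : Fin K → ℕ), (∀ i, 0 < N i) ∧
      (∫ x in (0 : ℝ)..1, ‖G₀ x * ∏ i : Fin K, G₀ ((N i : ℝ) * x)‖ ^ p) ^ (1 / p) ≤
        ε * (∫ x in (0 : ℝ)..1, ‖g₀ x * ∏ i : Fin K, g₀ ((N i : ℝ) * x)‖ ^ q) ^ (1 / q) := by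
  have he_succ :
      Periodic (fun x : ℝ => Complex.exp (2 * Real.pi * Complex.I * ((j : ℂ) + 1) * x)) 1 := by
    exact_mod_cast periodic_cexp_two_pi_I_int_mul (j + 1)
  have hG₀per : Periodic G₀ 1 := by
    rw [funext hG₀]
    exact ((periodic_cexp_two_pi_I_int_mul j).comp (1 + ·)).mul (he_succ.comp (1 + ·))
  have hg₀per : Periodic g₀ 1 := by
    rw [funext hg₀]
    exact ((periodic_cexp_two_pi_I_int_mul j).comp (1 + ·)).mul (he_succ.comp (1 - ·))
  have hG₀c : Continuous G₀ := by rw [funext hG₀]; fun_prop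
  have hg₀c : Continuous g₀ := by rw [funext hg₀]; fun_prop
  obtain ⟨u, hGu, huv⟩ := exists_between hlt
  obtain ⟨v, huv, hvg⟩ := exists_between huv
  have hv : 0 < v := (torusLpNorm_nonneg p G₀).trans_lt (hGu.trans huv)
  obtain ⟨K, hK⟩ := exists_pow_succ_le_mul_pow
    ((torusLpNorm_nonneg p G₀).trans hGu.le) huv hε
  obtain ⟨N, hN, hGN, hgN⟩ := exists_rieszProduct_torusLpNorm_bounds (by linarith) hq.le
    hG₀c hG₀per hg₀c hg₀per hGu hv hvg K
  exact ⟨K, N, hN, hGN.trans (hK.trans (by gcongr; exact hgN))⟩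

/-- **Riesz product amplification.** With `G₀ = (1+e_j)(1+e_{j+1})`,
`g₀ = (1+e_j)(1−e_{j+1})` (`j` odd, `j > p/2`, `p > 2` not an even integer) and
`q > 0` such that `‖G₀‖_{L^p} < ‖g₀‖_{L^q}`, for every `ε > 0` there are `K ∈ ℕ`
and positive integers `N_1, …, N_K` such that `G(t) = G₀(t) ∏_{i} G₀(N_i t)` and
`g(t) = g₀(t) ∏_{i} g₀(N_i t)` satisfy `‖G‖_{L^p} ≤ ε ‖g‖_{L^q}`. -/
theorem riesz_product_amplification
    (p : ℝ) (hp : 2 < p) (hpe : ∀ m : ℕ, p ≠ 2 * m)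
    (j : ℤ) (hj : Odd j) (hjp : p / 2 < (j : ℝ))
    (G₀ g₀ : ℝ → ℂ)
    (hG₀ : ∀ x : ℝ, G₀ x =
      (1 + Complex.exp (2 * Real.pi * Complex.I * (j : ℂ) * (x : ℂ))) *
        (1 + Complex.exp (2 * Real.pi * Complex.I * ((j : ℂ) + 1) * (x : ℂ))))
    (hg₀ : ∀ x : ℝ, g₀ x =
      (1 + Complex.exp (2 * Real.pi * Complex.I * (j : ℂ) * (x : ℂ))) *
        (1 - Complex.exp (2 * Real.pi * Complex.I * ((j : ℂ) + 1) * (x : ℂ))))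
    (q : ℝ) (hq : 0 < q)
    (hlt : (∫ x in (0 : ℝ)..1, ‖G₀ x‖ ^ p) ^ (1 / p) <
      (∫ x in (0 : ℝ)..1, ‖g₀ x‖ ^ q) ^ (1 / q))
    (ε : ℝ) (hε : 0 < ε) :
    ∃ (K : ℕ) (N : Fin K → ℕ), (∀ i, 0 < N i) ∧
      (∫ x in (0 : ℝ)..1, ‖G₀ x * ∏ i : Fin K, G₀ ((N i : ℝ) * x)‖ ^ p) ^ (1 / p) ≤
        ε * (∫ x in (0 : ℝ)..1, ‖g₀ x * ∏ i : Fin K, g₀ ((N i : ℝ) * x)‖ ^ q) ^ (1 / q) :=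
  riesz_product_amplification_general p hp j G₀ g₀ hG₀ hg₀ q hq hlt ε hε
end
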